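/- arXiv:2507.12866 — 12 statements merged into one kernel-verified Lean document; each statement's English description precedes it below -/
import Mathlib

section
/- Let G be a finite group acting transitively on a finite set Ω, and let x ∈ G be quasi-semiregular on Ω. Let r be a G-invariant equivalence relation on Ω (i.e., for all g ∈ G and a, b ∈ Ω, r a b implies r (g•a) (g•b)), so that the r-classes form a system of imprimitivity for G. Then the permutation induced by x on the quotient set Ω/r (the set of r-classes) is quasi-semiregular. -/
/-- An element `x` of a group `G` acting on `Ω` is *quasi-semiregular* if the cyclic group
`⟨x⟩` has a unique fixed point on `Ω` and acts semiregularly on the remaining points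
(i.e. any power of `x` fixing a point other than the unique fixed point acts trivially). -/
def IsQuasiSemiregular (G : Type*) [Group G] (Ω : Type*) [MulAction G Ω] (x : G) : Prop :=
  ∃ α : Ω, (∀ β : Ω, x • β = β ↔ β = α) ∧
    ∀ (n : ℤ) (β : Ω), β ≠ α → x ^ n • β = β → ∀ γ : Ω, x ^ n • γ = γ

section aux
variable {G Ω : Type*} [Group G] [Finite Ω] [MulAction G Ω]

lemma key_aux (htrans : MulAction.IsPretransitive G Ω) (x : G) (α : Ω)
    (hfix : ∀ β : Ω, x • β = β ↔ β = α)
    (hsemi : ∀ (n : ℤ) (β : Ω), β ≠ α → x ^ n • β = β → ∀ γ : Ω, x ^ n • γ = γ)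
    (s : Setoid Ω) (hs : ∀ (g : G) (a b : Ω), s.r a b → s.r (g • a) (g • b))
    (n : ℤ) (B : Quotient s) (hBA : B ≠ Quotient.mk'' α)
    (hB : Quotient.map' (fun a => x ^ n • a) (fun a b h => hs (x ^ n) a b h) B = B) :
    ∀ γ : Ω, x ^ n • γ = γ := by
  classical
  by_contra hcon
  push_neg at hcon
  obtain ⟨γ0, hγ0⟩ := hcon
  set π := MulAction.toPermHom G Ω with hπ
  set p : Equiv.Perm Ω := π (x ^ n) with hp
  have hpapp : ∀ (k : ℤ) (y : Ω), (π (x ^ k)) y = x ^ k • y := fun k y => rfl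
  have hpne : p ≠ 1 := by
    intro h
    apply hγ0
    have h1 : p γ0 = γ0 := by rw [h]; rfl
    exact h1
  set d := orderOf p with hd
  have hdpos : 0 < d := orderOf_pos p
  have hdne1 : d ≠ 1 := fun h => hpne (orderOf_eq_one_iff.mp h)
  set q := d.minFac with hqdef
  have hq : q.Prime := Nat.minFac_prime hdne1
  set e := d / q with he
  have hqd : q ∣ d := Nat.minFac_dvd d
  have hed : e ∣ d := Nat.div_dvd_of_dvd hqd
  have hde : d / e = q := Nat.div_div_self hqd (by omega)
  set gp : Equiv.Perm Ω := p ^ e with hgp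
  have hgord : orderOf gp = q := by
    rw [hgp, orderOf_pow, ← hd, Nat.gcd_eq_right hed, hde]
  -- gp = π (x ^ (n * e))
  have hgp' : ∀ (m : ℕ), p ^ m = π (x ^ (n * m)) := by
    intro m
    rw [hp, ← map_pow, ← zpow_natCast (x ^ n) m, ← zpow_mul]
  have hgpapp : ∀ y : Ω, gp y = x ^ (n * e) • y := by
    intro y; rw [hgp, hgp' e]; rfl
  -- fixed points of gp
  have hαzfix : ∀ (k : ℤ), x ^ k • α = α := by
    intro k
    have hxα : x ∈ MulAction.stabilizer G α := (hfix α).mpr rfl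
    exact (MulAction.stabilizer G α).zpow_mem hxα k
  have hgfix : ∀ β : Ω, gp β = β ↔ β = α := by
    intro β
    constructor
    · intro hβ
      by_contra hβα
      have htriv := hsemi (n * e) β hβα (by rw [← hgpapp]; exact hβ)
      have : gp = 1 := by
        ext y; rw [hgpapp]; exact htriv y
      rw [this, orderOf_one] at hgord
      exact hq.ne_one hgord.symm
    · rintro rfl
      rw [hgpapp]
      exact hαzfix (n * e)
  -- representative of B
  obtain ⟨b, hb⟩ := Quotient.exists_rep B
  have hb' : Quotient.mk'' b = B := hb
  -- invariance of the block sets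
  have hBinv : ∀ y : Ω, Quotient.mk'' y = B → Quotient.mk'' (x ^ n • y) = B := by
    intro y hy
    rw [← hB, ← hy, Quotient.map'_mk'']
  have hAinv : ∀ y : Ω, (Quotient.mk'' y : Quotient s) = Quotient.mk'' α →
      (Quotient.mk'' (x ^ n • y) : Quotient s) = Quotient.mk'' α := by
    intro y hy
    have hr : s.r y α := Quotient.exact' hy
    have := hs (x ^ n) y α hr
    rw [hαzfix n] at this
    exact Quotient.sound' this
  -- natural power invariance
  have hBinvN : ∀ (m : ℕ) (y : Ω), Quotient.mk'' y = B →
      Quotient.mk'' (x ^ (n * m) • y) = B := by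
    intro m
    induction m with
    | zero => intro y hy; simpa using hy
    | succ k ih =>
      intro y hy
      have : x ^ (n * (k + 1 : ℕ)) • y = x ^ n • (x ^ (n * k) • y) := by
        rw [smul_smul, ← zpow_add]
        congr 1
        push_cast
        ring
      rw [this]
      exact hBinv _ (ih y hy)
  have hAinvN : ∀ (m : ℕ) (y : Ω), (Quotient.mk'' y : Quotient s) = Quotient.mk'' α →
      (Quotient.mk'' (x ^ (n * m) • y) : Quotient s) = Quotient.mk'' α := by
    intro m
    induction m with
    | zero => intro y hy; simpa using hy
    | succ k ih =>
      intro y hy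
      have : x ^ (n * (k + 1 : ℕ)) • y = x ^ n • (x ^ (n * k) • y) := by
        rw [smul_smul, ← zpow_add]
        congr 1
        push_cast
        ring
      rw [this]
      exact hAinv _ (ih y hy)
  -- every element of zpowers gp is a natural power of gp
  have hK : ∀ k : Equiv.Perm Ω, k ∈ Subgroup.zpowers gp → ∃ m : ℕ, k = gp ^ m := by
    intro k hk
    obtain ⟨j, hj⟩ := Subgroup.mem_zpowers_iff.mp hk
    refine ⟨(j % (q : ℤ)).toNat, ?_⟩
    have hq0 : (0:ℤ) < (q:ℤ) := by exact_mod_cast hq.pos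
    have : gp ^ ((j % (q:ℤ)).toNat : ℤ) = gp ^ j := by
      rw [Int.toNat_of_nonneg (Int.emod_nonneg j (by omega)), ← hgord, zpow_mod_orderOf]
    rw [← hj, ← this, zpow_natCast]
  -- gp ^ m as smul
  have hgpm : ∀ (m : ℕ) (y : Ω), (gp ^ m) y = x ^ (n * (e * m)) • y := by
    intro m y
    rw [hgp, ← pow_mul, hgp' (e * m)]
    push_cast
    rfl
  set K := Subgroup.zpowers gp with hKdef
  -- SubMulActions
  set Bset : SubMulAction K Ω :=
    { carrier := {y : Ω | Quotient.mk'' y = B}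
      smul_mem' := by
        rintro ⟨k, hk⟩ y hy
        obtain ⟨m, rfl⟩ := hK k hk
        show Quotient.mk'' ((gp ^ m) • y) = B
        have : (gp ^ m) • y = (gp ^ m) y := rfl
        rw [this, hgpm m y]
        have := hBinvN (e * m) y hy
        exact_mod_cast this } with hBset
  set Aset : SubMulAction K Ω :=
    { carrier := {y : Ω | (Quotient.mk'' y : Quotient s) = Quotient.mk'' α}
      smul_mem' := by
        rintro ⟨k, hk⟩ y hy
        obtain ⟨m, rfl⟩ := hK k hk
        show (Quotient.mk'' ((gp ^ m) • y) : Quotient s) = Quotient.mk'' α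
        have : (gp ^ m) • y = (gp ^ m) y := rfl
        rw [this, hgpm m y]
        exact hAinvN (e * m) y hy } with hAset
  haveI : Fact q.Prime := ⟨hq⟩
  have hKcard : IsPGroup q K := IsPGroup.of_card (n := 1) (by rw [pow_one, hKdef, Nat.card_zpowers, hgord])
  have hmodB := hKcard.card_modEq_card_fixedPoints (α := Bset)
  have hmodA := hKcard.card_modEq_card_fixedPoints (α := Aset)
  -- fixed points of K on Bset : empty
  have hBfix : IsEmpty (MulAction.fixedPoints K Bset) := by
    constructor
    rintro ⟨⟨β, hβ⟩, hβfix⟩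
    have := hβfix (⟨gp, Subgroup.mem_zpowers gp⟩ : K)
    have hgβ : gp β = β := by
      have := congrArg Subtype.val this
      exact this
    have hβα : β = α := (hgfix β).mp hgβ
    subst hβα
    exact hBA (Eq.symm hβ)
  -- fixed points of K on Aset : exactly α
  have hAfix : Nat.card (MulAction.fixedPoints K Aset) = 1 := by
    have hαmem : (⟨α, rfl⟩ : Aset) ∈ MulAction.fixedPoints K Aset := by
      rintro ⟨k, hk⟩
      obtain ⟨m, rfl⟩ := hK k hk
      apply Subtype.ext
      show (gp ^ m) α = α
      rw [hgpm m α]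
      exact hαzfix _
    rw [Nat.card_eq_one_iff_unique]
    constructor
    · constructor
      rintro ⟨⟨β, hβ⟩, hβfix⟩ ⟨⟨β', hβ'⟩, hβ'fix⟩
      have h1 : gp β = β := congrArg Subtype.val (hβfix (⟨gp, Subgroup.mem_zpowers gp⟩ : K))
      have h2 : gp β' = β' := congrArg Subtype.val (hβ'fix (⟨gp, Subgroup.mem_zpowers gp⟩ : K))
      have : β = α := (hgfix β).mp h1
      have : β' = α := (hgfix β').mp h2
      subst_vars
      rfl
    · exact ⟨⟨⟨α, rfl⟩, hαmem⟩⟩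
  -- |Aset| = |Bset|
  have hcard : Nat.card Aset = Nat.card Bset := by
    obtain ⟨g, hg⟩ := htrans.exists_smul_eq α b
    refine Nat.card_congr ⟨fun y => ⟨g • y.1, ?_⟩, fun z => ⟨g⁻¹ • z.1, ?_⟩, ?_, ?_⟩
    · obtain ⟨y, hy⟩ := y
      have hr : s.r y α := Quotient.exact' hy
      have := hs g y α hr
      rw [hg] at this
      show Quotient.mk'' (g • y) = B
      rw [← hb', Quotient.sound' this]
    · obtain ⟨z, hz⟩ := z
      have hzb : s.r z b := Quotient.exact' (hz.trans hb'.symm)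
      have := hs g⁻¹ z b hzb
      rw [← hg, inv_smul_smul] at this
      exact Quotient.sound' this
    · rintro ⟨y, hy⟩; apply Subtype.ext; exact inv_smul_smul g y
    · rintro ⟨z, hz⟩; apply Subtype.ext; exact smul_inv_smul g z
  -- contradiction
  have hB0 : Nat.card Bset ≡ 0 [MOD q] := by
    have : Nat.card (MulAction.fixedPoints K Bset) = 0 := Nat.card_of_isEmpty
    rw [← this]
    exact hmodB
  have hA1 : Nat.card Aset ≡ 1 [MOD q] := hAfix ▸ hmodA
  rw [hcard] at hA1
  have := hB0.symm.trans hA1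
  have h01 : (0 : ℕ) % q = 1 % q := this
  rw [Nat.zero_mod, Nat.mod_eq_of_lt hq.one_lt] at h01
  exact absurd h01 (by omega)

end aux

theorem stmt0 {G Ω : Type*} [Group G] [Finite G] [Finite Ω] [MulAction G Ω]
    (htrans : MulAction.IsPretransitive G Ω)
    (x : G) (hx : IsQuasiSemiregular G Ω x)
    (s : Setoid Ω) (hs : ∀ (g : G) (a b : Ω), s.r a b → s.r (g • a) (g • b)) :
    ∃ A : Quotient s,
      (∀ B : Quotient s,
        Quotient.map' (fun a => x • a) (fun a b h => hs x a b h) B = B ↔ B = A) ∧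
      ∀ (n : ℤ) (B : Quotient s), B ≠ A →
        Quotient.map' (fun a => x ^ n • a) (fun a b h => hs (x ^ n) a b h) B = B →
        ∀ C : Quotient s,
          Quotient.map' (fun a => x ^ n • a) (fun a b h => hs (x ^ n) a b h) C = C := by
  obtain ⟨α, hfix, hsemi⟩ := hx
  refine ⟨Quotient.mk'' α, ?_, ?_⟩
  · intro B
    constructor
    · intro hB
      by_contra hBA
      have hB1 : Quotient.map' (fun a => x ^ (1:ℤ) • a)
          (fun a b h => hs (x ^ (1:ℤ)) a b h) B = B := by
        simpa only [zpow_one] using hB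
      have htriv := key_aux htrans x α hfix hsemi s hs 1 B hBA hB1
      obtain ⟨b, hb⟩ := Quotient.exists_rep B
      apply hBA
      rw [← hb]
      have hbα : b = α := (hfix b).mp (by simpa only [zpow_one] using htriv b)
      rw [hbα]
    · rintro rfl
      have hxα : x • α = α := (hfix α).mpr rfl
      show Quotient.map' _ _ (Quotient.mk'' α) = Quotient.mk'' α
      rw [Quotient.map'_mk'', hxα]
  · intro n B hBA hB C
    have htriv := key_aux htrans x α hfix hsemi s hs n B hBA hB
    obtain ⟨c, hc⟩ := Quotient.exists_rep C
    rw [← hc]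
    show Quotient.map' _ _ (Quotient.mk'' c) = Quotient.mk'' c
    rw [Quotient.map'_mk'', htriv c]
end

section
/- Let G be a finite group acting transitively on a finite set Ω, let α ∈ Ω with stabilizer H = G_α, and suppose H contains a quasi-semiregular element of order p^i for some prime p and i ≥ 1. If S is a Sylow p-subgroup of G with S ≤ H, then N_G(S) ≤ N_G(H); moreover, if N_G(H) = H, then N_G(S) = N_H(S), where N_H(S) = N_G(S) ∩ H. -/
/-!
Conjugating the quasi-semiregular `p`-element `x` by an element of `H` moves it into `S`
without moving its unique fixed point `α`. An element `g` normalising `S` sends this conjugate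
`y ∈ S` to `g y g⁻¹ ∈ S ≤ G_α`, whose unique fixed point is `g • α`; hence `g • α = α`,
i.e. `N_G(S) ≤ H ≤ N_G(H)`.
-/

open MulAction Subgroup

theorem IsPGroup.exists_conj_mem_sylow {K : Type*} [Group K] {p : ℕ} [Fact p.Prime]
    [Finite (Sylow p K)] {x : K} (hx : IsPGroup p (zpowers x)) (P : Sylow p K) :
    ∃ g : K, g * x * g⁻¹ ∈ P := by
  obtain ⟨Q, hQ⟩ := hx.exists_le_sylow
  obtain ⟨g, rfl⟩ := exists_smul_eq K Q P
  refine ⟨g, ?_⟩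
  change _ ∈ ((g • Q : Sylow p K) : Subgroup K)
  rw [Sylow.coe_subgroup_smul]
  exact smul_mem_pointwise_smul x (MulAut.conj g) (Q : Subgroup K) (hQ (mem_zpowers x))

theorem IsQuasiSemiregular.fixedBy_eq_singleton {G Ω : Type*} [Group G] [MulAction G Ω]
    {x : G} (hx : IsQuasiSemiregular G Ω x) {α : Ω} (hα : x • α = α) :
    fixedBy Ω x = {α} := by
  obtain ⟨α₀, hfix, -⟩ := hx
  ext β
  rw [Set.mem_singleton_iff, (hfix α).mp hα]
  exact hfix β

theorem normalizer_le_stabilizer_of_fixedBy_eq_singleton {G Ω : Type*} [Group G]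
    [MulAction G Ω] {S : Subgroup G} {α : Ω} {y : G} (hS : S ≤ stabilizer G α) (hyS : y ∈ S)
    (hy : fixedBy Ω y = {α}) : normalizer (S : Set G) ≤ stabilizer G α := by
  intro g hg
  have hα : α ∈ fixedBy Ω (g * y * g⁻¹) := hS ((mem_normalizer_iff.mp hg y).mp hyS)
  rw [← smul_fixedBy, hy, Set.smul_set_singleton, Set.mem_singleton_iff] at hα
  exact hα.symm

theorem stmt3_general {G Ω : Type*} [Group G] [Finite G] [MulAction G Ω] (α : Ω)
    (H : Subgroup G) (hH : H = MulAction.stabilizer G α)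
    (p : ℕ) (hp : p.Prime) (x : G) (hxH : x ∈ H) (i : ℕ)
    (hord : orderOf x = p ^ i) (hx : IsQuasiSemiregular G Ω x)
    (S : Sylow p G) (hSH : (S : Subgroup G) ≤ H) :
    Subgroup.normalizer ((S : Subgroup G) : Set G) ≤ Subgroup.normalizer (H : Set G) ∧
      (Subgroup.normalizer (H : Set G) = H →
        Subgroup.normalizer ((S : Subgroup G) : Set G) = Subgroup.normalizer ((S : Subgroup G) : Set G) ⊓ H) := by
  have : Fact p.Prime := ⟨hp⟩
  subst hH
  have hpx : IsPGroup p (zpowers (⟨x, hxH⟩ : stabilizer G α)) :=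
    IsPGroup.of_card (by rw [Nat.card_zpowers, Subgroup.orderOf_mk, hord])
  obtain ⟨h, hh⟩ := hpx.exists_conj_mem_sylow (S.subtype hSH)
  have hy : fixedBy Ω ((h : G) * x * (h : G)⁻¹) = {α} := by
    rw [← smul_fixedBy, hx.fixedBy_eq_singleton hxH, Set.smul_set_singleton, h.2]
  have hN : normalizer ((S : Subgroup G) : Set G) ≤ stabilizer G α :=
    normalizer_le_stabilizer_of_fixedBy_eq_singleton hSH hh hy
  exact ⟨hN.trans le_normalizer, fun _ => (inf_eq_left.mpr hN).symm⟩

theorem stmt3 {G Ω : Type*} [Group G] [Finite G] [Finite Ω] [MulAction G Ω]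
    (htrans : MulAction.IsPretransitive G Ω) (α : Ω)
    (H : Subgroup G) (hH : H = MulAction.stabilizer G α)
    (p : ℕ) (hp : p.Prime) (x : G) (hxH : x ∈ H) (i : ℕ) (hi : 1 ≤ i)
    (hord : orderOf x = p ^ i) (hx : IsQuasiSemiregular G Ω x)
    (S : Sylow p G) (hSH : (S : Subgroup G) ≤ H) :
    Subgroup.normalizer ((S : Subgroup G) : Set G) ≤ Subgroup.normalizer (H : Set G) ∧
      (Subgroup.normalizer (H : Set G) = H →
        Subgroup.normalizer ((S : Subgroup G) : Set G) = Subgroup.normalizer ((S : Subgroup G) : Set G) ⊓ H) :=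
  stmt3_general α H hH p hp x hxH i hord hx S hSH
end

section
/- Let G be a finite group acting transitively on a finite set Ω, let α ∈ Ω with stabilizer G_α, and let g ∈ G_α have prime order. Then g is quasi-semiregular on Ω if and only if both: (i) every G-conjugate of g lying in G_α is G_α-conjugate to g (i.e., g^G ∩ G_α = g^{G_α}), and (ii) the centralizer of g in G is contained in G_α (i.e., C_G(g) = C_{G_α}(g)). -/
theorem stmt5 {G Ω : Type*} [Group G] [Finite G] [Finite Ω] [MulAction G Ω]
    (htrans : MulAction.IsPretransitive G Ω) (α : Ω) (g : G)
    (hg : g ∈ MulAction.stabilizer G α) (hord : (orderOf g).Prime) :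
    IsQuasiSemiregular G Ω g ↔
      ((∀ y : G, (∃ h : G, h * g * h⁻¹ = y) → y ∈ MulAction.stabilizer G α →
          ∃ h ∈ MulAction.stabilizer G α, h * g * h⁻¹ = y) ∧
        ∀ c : G, c * g = g * c → c ∈ MulAction.stabilizer G α) := by
  have hgα : g • α = α := hg
  constructor
  · rintro ⟨α', hfix, -⟩
    have hαα' : α = α' := (hfix α).mp hgα
    subst hαα'
    constructor
    · rintro y ⟨h, rfl⟩ hy
      have hy' : (h * g * h⁻¹) • α = α := hy
      have : g • (h⁻¹ • α) = h⁻¹ • α := by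
        have := congrArg (fun z => h⁻¹ • z) hy'
        simpa [smul_smul, mul_assoc] using this
      have hh : h⁻¹ • α = α := (hfix _).mp this
      have hhs : h ∈ MulAction.stabilizer G α := by
        have := congrArg (fun z => h • z) hh
        simpa using this.symm
      exact ⟨h, hhs, rfl⟩
    · intro c hc
      have : g • (c • α) = c • α := by
        rw [smul_smul, ← hc, ← smul_smul, hgα]
      exact (hfix _).mp this
  · rintro ⟨hfus, hcent⟩
    have hmain : ∀ β : Ω, g • β = β → β = α := by
      intro β hβ
      obtain ⟨k, rfl⟩ := htrans.exists_smul_eq α β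
      have hy : k⁻¹ * g * k ∈ MulAction.stabilizer G α := by
        show (k⁻¹ * g * k) • α = α
        have := congrArg (fun z => k⁻¹ • z) hβ
        simpa [smul_smul, mul_assoc] using this
      obtain ⟨h, hhα, hh⟩ := hfus _ ⟨k⁻¹, by group⟩ hy
      have hcomm : (k * h) * g = g * (k * h) := by
        have : k * (h * g * h⁻¹) * k⁻¹ = g := by
          rw [hh]; group
        calc (k * h) * g = (k * (h * g * h⁻¹) * k⁻¹) * (k * h) := by group
          _ = g * (k * h) := by rw [this]
      have hkh : (k * h) ∈ MulAction.stabilizer G α := hcent _ hcomm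
      have hkhα : (k * h) • α = α := hkh
      have hhα' : h • α = α := hhα
      calc k • α = (k * h) • α := by rw [mul_smul, hhα']
        _ = α := hkhα
    refine ⟨α, fun β => ⟨hmain β, by rintro rfl; exact hgα⟩, ?_⟩
    intro n β hβ hfixn γ
    by_cases h1 : g ^ n = 1
    · rw [h1, one_smul]
    · exfalso
      apply hβ
      apply hmain
      have hnd : ¬ ((orderOf g : ℤ) ∣ n) := by
        intro hd
        exact h1 (orderOf_dvd_iff_zpow_eq_one.mp hd)
      have hnd' : ¬ (orderOf g ∣ n.natAbs) := by
        intro hd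
        exact hnd (Int.dvd_natAbs.mp (Int.natCast_dvd_natCast.mpr hd))
      have hcop : IsCoprime (orderOf g : ℤ) n := by
        rw [Int.isCoprime_iff_gcd_eq_one]
        exact Nat.Coprime.gcd_eq_one ((Nat.Prime.coprime_iff_not_dvd hord).mpr hnd')
      obtain ⟨u, v, huv⟩ := hcop
      have hmem : g ^ n ∈ MulAction.stabilizer G β := hfixn
      have hmem2 : g ∈ MulAction.stabilizer G β := by
        have : g = (g ^ (orderOf g : ℤ)) ^ u * (g ^ n) ^ v := by
          rw [← zpow_mul, ← zpow_mul, ← zpow_add]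
          have he : (orderOf g : ℤ) * u + n * v = 1 := by linear_combination huv
          rw [he, zpow_one]
        rw [this]
        have h0 : g ^ (orderOf g : ℤ) = 1 := by
          rw [zpow_natCast, pow_orderOf_eq_one]
        rw [h0, one_zpow, one_mul]
        exact Subgroup.zpow_mem _ hmem v
      exact hmem2
end

section
/- Let G be a finite group acting transitively on a finite set Ω with point stabilizer H = G_α for some α ∈ Ω. Let x ∈ H have prime order and set K = ⟨x⟩. Then x is quasi-semiregular on Ω if and only if both: (i) N_G(K) = N_H(K) (i.e., N_G(K) ≤ H), and (ii) for every g ∈ G with g K g⁻¹ ≤ H there exists h ∈ H with g K g⁻¹ = h K h⁻¹ (every G-conjugate of K contained in H is H-conjugate to K). -/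
/-- The conjugate `g K g⁻¹` of a subgroup `K` by the element `g`. -/
def conjSubgroup {G : Type*} [Group G] (g : G) (K : Subgroup G) : Subgroup G :=
  K.map (MulAut.conj g).toMonoidHom

/-!
Since `x` has prime order, every nontrivial power of `x` generates `K = ⟨x⟩`, so `x` is
quasi-semiregular iff `K` fixes no point other than `α`. Now `K` fixes `g • α` iff
`g⁻¹ K g ≤ H`; then (ii) gives `h ∈ H` with `g h ∈ N_G(K)`, and (i) puts `g h`, hence `g`,
in `H`, so `g • α = α`. Conversely, for `n ∈ N_G(K)` and for `g` with `g K g⁻¹ ≤ H`, the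
points `n • α` and `g⁻¹ • α` are fixed by `K`, hence equal to `α`.
-/

open MulAction Subgroup

section conjSubgroup

variable {G : Type*} [Group G]

lemma conjSubgroup_one (K : Subgroup G) : conjSubgroup 1 K = K := by
  simp only [conjSubgroup, map_one]
  exact K.map_id

lemma conjSubgroup_mul (a b : G) (K : Subgroup G) :
    conjSubgroup (a * b) K = conjSubgroup a (conjSubgroup b K) := by
  simp only [conjSubgroup, map_map, map_mul]
  rfl

lemma conjSubgroup_le_iff {g : G} {K L : Subgroup G} :
    conjSubgroup g K ≤ L ↔ K ≤ conjSubgroup g⁻¹ L := by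
  rw [conjSubgroup, conjSubgroup, map_le_iff_le_comap, map_equiv_eq_comap_symm', map_inv]
  rfl

lemma mem_normalizer_iff_conjSubgroup_eq {g : G} {K : Subgroup G} :
    g ∈ normalizer (K : Set G) ↔ conjSubgroup g K = K :=
  mem_normalizer_iff_map_conj_eq

end conjSubgroup

lemma stabilizer_smul_eq_conjSubgroup {G Ω : Type*} [Group G] [MulAction G Ω] (g : G) (a : Ω) :
    stabilizer G (g • a) = conjSubgroup g (stabilizer G a) :=
  stabilizer_smul_eq_stabilizer_map_conj g a

lemma mem_zpowers_of_mem_zpowers_of_prime {G : Type*} [Group G] {x y : G}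
    (hx : (orderOf x).Prime) (hy : y ∈ zpowers x) (hy1 : y ≠ 1) : x ∈ zpowers y := by
  have : Finite (zpowers x) := (orderOf_pos_iff.mp hx.pos).finite_zpowers.to_subtype
  have hyx : orderOf y = orderOf x :=
    (hx.eq_one_or_self_of_dvd _ (orderOf_dvd_of_mem_zpowers hy)).resolve_left
      (by rwa [orderOf_eq_one_iff])
  rw [← zpowers_le, eq_of_le_of_card_ge (zpowers_le.2 hy)
    (by rw [Nat.card_zpowers, Nat.card_zpowers, hyx])]

section Action

variable {G Ω : Type*} [Group G] [MulAction G Ω]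

lemma le_stabilizer_smul_iff {K : Subgroup G} (g : G) (α : Ω) :
    K ≤ stabilizer G (g • α) ↔ conjSubgroup g⁻¹ K ≤ stabilizer G α := by
  rw [stabilizer_smul_eq_conjSubgroup, conjSubgroup_le_iff, inv_inv]

theorem forall_le_stabilizer_imp_eq_iff [IsPretransitive G Ω] {α : Ω} {K : Subgroup G}
    (hK : K ≤ stabilizer G α) :
    (∀ β, K ≤ stabilizer G β → β = α) ↔
      normalizer (K : Set G) ≤ stabilizer G α ∧
        ∀ g, conjSubgroup g K ≤ stabilizer G α →
          ∃ h ∈ stabilizer G α, conjSubgroup h K = conjSubgroup g K := by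
  constructor
  · intro hfix
    refine ⟨fun g hg => hfix (g • α) ?_, fun g hg => ⟨g, ?_, rfl⟩⟩
    · rwa [le_stabilizer_smul_iff, mem_normalizer_iff_conjSubgroup_eq.1 (inv_mem hg)]
    · rw [← inv_mem_iff, mem_stabilizer_iff]
      exact hfix _ ((le_stabilizer_smul_iff _ _).2 (by rwa [inv_inv]))
  · rintro ⟨hN, hconj⟩ β hβ
    obtain ⟨g, rfl⟩ := exists_smul_eq G α β
    obtain ⟨h, hh, hhg⟩ := hconj g⁻¹ ((le_stabilizer_smul_iff g α).1 hβ)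
    have hgh : g * h ∈ normalizer (K : Set G) := by
      rw [mem_normalizer_iff_conjSubgroup_eq, conjSubgroup_mul, hhg, ← conjSubgroup_mul,
        mul_inv_cancel, conjSubgroup_one]
    exact (mul_mem_cancel_right hh).1 (hN hgh)

theorem isQuasiSemiregular_iff_of_prime {x : G} (hx : (orderOf x).Prime) {α : Ω}
    (hα : x • α = α) : IsQuasiSemiregular G Ω x ↔ ∀ β, x • β = β → β = α := by
  constructor
  · rintro ⟨α', hfix, -⟩ β hβ
    rw [(hfix β).1 hβ, ← (hfix α).1 hα]
  · intro hfix
    refine ⟨α, fun β => ⟨hfix β, by rintro rfl; exact hα⟩, fun n β hβα hn γ => ?_⟩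
    by_cases hxn : x ^ n = 1
    · rw [hxn, one_smul]
    · have hx_mem : x ∈ zpowers (x ^ n) :=
        mem_zpowers_of_mem_zpowers_of_prime hx (zpow_mem (mem_zpowers x) n) hxn
      exact absurd (hfix β (zpowers_le.2 (mem_stabilizer_iff.2 hn) hx_mem)) hβα

end Action

theorem stmt6_general {G Ω : Type*} [Group G] [MulAction G Ω]
    (htrans : MulAction.IsPretransitive G Ω) (α : Ω)
    (H : Subgroup G) (hH : H = MulAction.stabilizer G α)
    (x : G) (hx : x ∈ H) (hord : (orderOf x).Prime) :
    IsQuasiSemiregular G Ω x ↔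
      (Subgroup.normalizer (Subgroup.zpowers x : Set G) ≤ H ∧
        ∀ g : G, conjSubgroup g (Subgroup.zpowers x) ≤ H →
          ∃ h ∈ H, conjSubgroup h (Subgroup.zpowers x) =
            conjSubgroup g (Subgroup.zpowers x)) := by
  subst hH
  rw [isQuasiSemiregular_iff_of_prime hord hx,
    ← forall_le_stabilizer_imp_eq_iff (zpowers_le.2 hx)]
  simp only [zpowers_le, mem_stabilizer_iff]

theorem stmt6 {G Ω : Type*} [Group G] [Finite G] [Finite Ω] [MulAction G Ω]
    (htrans : MulAction.IsPretransitive G Ω) (α : Ω)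
    (H : Subgroup G) (hH : H = MulAction.stabilizer G α)
    (x : G) (hx : x ∈ H) (hord : (orderOf x).Prime) :
    IsQuasiSemiregular G Ω x ↔
      (Subgroup.normalizer (Subgroup.zpowers x : Set G) ≤ H ∧
        ∀ g : G, conjSubgroup g (Subgroup.zpowers x) ≤ H →
          ∃ h ∈ H, conjSubgroup h (Subgroup.zpowers x) =
            conjSubgroup g (Subgroup.zpowers x)) :=
  stmt6_general htrans α H hH x hx hord
end

section
/- Let I be a nonempty finite set, let Δ be a set, let p be a prime, and let h : I → Sym(Δ) be such that for every i ∈ I the permutation h i is quasi-semiregular on Δ and has order p. Then the permutation g of the set of functions I → Δ defined by (g·x)(i) = (h i)(x i) is quasi-semiregular of order p. -/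
/-- A permutation `g` of `Ω` is *quasi-semiregular* if `g` fixes exactly one point `α`
and no power of `g` other than the identity fixes any point of `Ω \ {α}`. -/
def IsQuasiSemiregularPerm {Ω : Type*} (g : Equiv.Perm Ω) : Prop :=
  ∃ α : Ω, (∀ β : Ω, g β = β ↔ β = α) ∧
    ∀ (n : ℤ) (β : Ω), β ≠ α → (g ^ n) β = β → g ^ n = 1

theorem stmt10 {I Δ : Type*} [Fintype I] [Nonempty I] {p : ℕ} (hp : p.Prime)
    (h : I → Equiv.Perm Δ)
    (hq : ∀ i, IsQuasiSemiregularPerm (h i)) (hord : ∀ i, orderOf (h i) = p)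
    (g : Equiv.Perm (I → Δ)) (hg : ∀ (x : I → Δ) (i : I), g x i = h i (x i)) :
    IsQuasiSemiregularPerm g ∧ orderOf g = p := by
  classical
  -- coordinatewise formula for natural powers
  have hpow : ∀ (n : ℕ) (x : I → Δ) (i : I), (g ^ n) x i = ((h i) ^ n) (x i) := by
    intro n
    induction n with
    | zero => intro x i; simp
    | succ n ih =>
      intro x i
      rw [pow_succ, pow_succ]
      simp only [Equiv.Perm.mul_apply]
      rw [ih (g x) i, hg x i]
  -- coordinatewise formula for integer powers
  have hzpow : ∀ (n : ℤ) (x : I → Δ) (i : I), (g ^ n) x i = ((h i) ^ n) (x i) := by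
    intro n x i
    cases n with
    | ofNat m => simpa using hpow m x i
    | negSucc m =>
      have key := hpow (m + 1) ((g ^ (m + 1))⁻¹ x) i
      rw [show (g ^ (m+1)) ((g ^ (m+1))⁻¹ x) = x from Equiv.apply_symm_apply _ x] at key
      have : ((g ^ (m+1))⁻¹ x) i = ((h i ^ (m+1))⁻¹) (x i) := by
        apply (Equiv.apply_eq_iff_eq_symm_apply _).mp key.symm |>.trans rfl
      simp only [zpow_negSucc]
      exact this
  -- fixed points
  set α : I → Δ := fun i => (hq i).choose with hα
  have hfix : ∀ i (β : Δ), h i β = β ↔ β = α i := fun i => (hq i).choose_spec.1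
  have hsemi : ∀ i (n : ℤ) (β : Δ), β ≠ α i → ((h i) ^ n) β = β → (h i) ^ n = 1 :=
    fun i => (hq i).choose_spec.2
  have hgp : g ^ p = 1 := by
    ext x i
    have := hpow p x i
    simp only [this]
    rw [← hord i, pow_orderOf_eq_one]
    rfl
  have hgne : g ≠ 1 := by
    intro hg1
    obtain ⟨i⟩ := ‹Nonempty I›
    have h1 : h i = 1 := by
      ext β
      have := hg (fun _ => β) i
      rw [hg1] at this
      exact this.symm
    have h2 := hord i
    rw [h1, orderOf_one] at h2
    exact hp.one_lt.ne' h2.symm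
  constructor
  · refine ⟨α, ?_, ?_⟩
    · intro x
      constructor
      · intro hx
        funext i
        exact (hfix i (x i)).mp (by rw [← hg x i]; exact congrFun hx i)
      · intro hx
        funext i
        rw [hg, hx]
        exact (hfix i (α i)).mpr rfl
    · intro n x hxα hfixn
      obtain ⟨i, hi⟩ : ∃ i, x i ≠ α i := by
        by_contra hc
        push_neg at hc
        exact hxα (funext hc)
      have hcoord : ((h i) ^ n) (x i) = x i := by
        rw [← hzpow n x i]; exact congrFun hfixn i
      have h1 : (h i) ^ n = 1 := hsemi i n (x i) hi hcoord
      have hdvd : (p : ℤ) ∣ n := by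
        have := orderOf_dvd_iff_zpow_eq_one.mpr h1
        rwa [hord i] at this
      obtain ⟨k, hk⟩ := hdvd
      rw [hk, zpow_mul]
      have : (g : Equiv.Perm (I → Δ)) ^ (p : ℤ) = 1 := by
        rw [zpow_natCast, hgp]
      rw [this, one_zpow]
  · have hdvd : orderOf g ∣ p := orderOf_dvd_of_pow_eq_one hgp
    rcases (Nat.Prime.eq_one_or_self_of_dvd hp _ hdvd) with h1 | hpp
    · exfalso; exact hgne (orderOf_eq_one_iff.mp h1)
    · exact hpp
end

section
/- Let I and Δ be finite sets, let h : I → Sym(Δ), let σ ∈ Sym(I), and let g be the permutation of the set of functions I → Δ given by (g·x)(i) = (h (σ⁻¹ i))(x (σ⁻¹ i)). Suppose g has prime order p and g is quasi-semiregular on the set of functions I → Δ. Then σ is the identity permutation of I and, for every i ∈ I, the permutation h i is quasi-semiregular on Δ. -/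
open Equiv Function

section Pi

variable {I : Type*} {Δ : I → Type*}

lemma MulAction.toPerm_pi_zpow_apply (h : ∀ i, Perm (Δ i)) (n : ℤ) (x : ∀ i, Δ i) (i : I) :
    (MulAction.toPerm h ^ n : Perm (∀ i, Δ i)) x i = (h i ^ n) (x i) := by
  rw [← MulAction.toPermHom_apply, ← map_zpow]
  rfl

theorem IsQuasiSemiregularPerm.of_toPerm_pi {h : ∀ i, Perm (Δ i)}
    (hq : IsQuasiSemiregularPerm (MulAction.toPerm h : Perm (∀ i, Δ i))) (i : I) :
    IsQuasiSemiregularPerm (h i) := by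
  classical
  obtain ⟨α, hfix, hpow⟩ := hq
  set g : Perm (∀ i, Δ i) := MulAction.toPerm h
  have hα : ∀ n : ℤ, (g ^ n) α = α :=
    Perm.zpow_apply_eq_self_of_apply_eq_self ((hfix α).mpr rfl)
  have hupdate : ∀ (n : ℤ) (β : Δ i),
      (g ^ n) (update α i β) = update α i ((h i ^ n) β) := by
    intro n β
    funext k
    rw [MulAction.toPerm_pi_zpow_apply]
    by_cases hk : k = i
    · subst hk
      simp
    · rw [update_of_ne hk, update_of_ne hk, ← MulAction.toPerm_pi_zpow_apply, hα]
  refine ⟨α i, fun β => ?_, fun n β hβ hβn => ?_⟩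
  · have hg1 := hupdate 1 β
    rw [zpow_one, zpow_one] at hg1
    rw [← (update_injective α i).eq_iff, ← hg1, hfix, update_eq_self_iff]
  · have hgn : g ^ n = 1 := hpow n (update α i β) (by rwa [Ne, update_eq_self_iff])
      (by rw [hupdate, hβn])
    ext d
    simpa [hgn] using (congrFun (hupdate n d) i).symm

end Pi

def productActionPerm {I Δ : Type*} (h : I → Perm Δ) (σ : Perm I) : Perm (I → Δ) :=
  (piCongrRight h).trans (arrowCongr σ (Equiv.refl Δ))

section ProductAction

variable {I Δ : Type*} {h : I → Perm Δ} {σ : Perm I}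

@[simp]
lemma productActionPerm_apply (h : I → Perm Δ) (σ : Perm I) (x : I → Δ) (i : I) :
    productActionPerm h σ x i = h (σ⁻¹ i) (x (σ⁻¹ i)) := rfl

lemma productActionPerm_apply_apply (x : I → Δ) (i : I) :
    productActionPerm h σ x (σ i) = h i (x i) := by
  simp

lemma productActionPerm_one (h : I → Perm Δ) :
    productActionPerm h 1 = MulAction.toPerm h := rfl

lemma productActionPerm_pow_apply_eq_iff {α : I → Δ} (hα : productActionPerm h σ α = α)
    (x : I → Δ) (i : I) (n : ℕ) :
    (productActionPerm h σ ^ n) x ((σ ^ n) i) = α ((σ ^ n) i) ↔ x i = α i := by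
  induction n with
  | zero => simp
  | succ n ih =>
    conv_rhs => rw [← ih]
    rw [pow_succ', pow_succ', Perm.mul_apply, Perm.mul_apply, productActionPerm_apply_apply,
      ← hα, productActionPerm_apply_apply, hα, (h _).injective.eq_iff]

lemma pow_apply_eq_self_of_productActionPerm_pow_eq_one {α : I → Δ}
    (hα : productActionPerm h σ α = α) {n : ℕ} (hn : productActionPerm h σ ^ n = 1)
    {j : I} {d : Δ} (hd : d ≠ α j) : (σ ^ n) j = j := by
  classical
  by_contra hne
  have hmoved :=
    (productActionPerm_pow_apply_eq_iff hα (update α j d) j n).not.mpr (by simpa)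
  rw [hn, Perm.one_apply, update_of_ne hne] at hmoved
  exact hmoved rfl

lemma exists_productActionPerm_apply_eq_self {α : I → Δ} (hα : productActionPerm h σ α = α)
    {j : I} (hstab : ∀ k : ℤ, (σ ^ k) j = j → productActionPerm h σ ^ k = 1)
    (y : I → Δ) : ∃ x, productActionPerm h σ x = x ∧ x j = y j := by
  classical
  set g := productActionPerm h σ
  have hwd : ∀ n m : ℤ, (σ ^ n) j = (σ ^ m) j → g ^ n = g ^ m := by
    intro n m hnm
    have hdiff : g ^ (-m + n) = 1 := hstab _ (by
      rw [zpow_add, Perm.mul_apply, hnm, zpow_neg, Perm.coe_inv, symm_apply_apply])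
    rw [zpow_add, zpow_neg, inv_mul_eq_one] at hdiff
    exact hdiff.symm
  let x : I → Δ := fun i =>
    if hi : ∃ n : ℤ, (σ ^ n) j = i then (g ^ hi.choose) y i else α i
  have hx_orbit : ∀ n : ℤ, x ((σ ^ n) j) = (g ^ n) y ((σ ^ n) j) := by
    intro n
    have hi : ∃ m : ℤ, (σ ^ m) j = (σ ^ n) j := ⟨n, rfl⟩
    simp only [x, dif_pos hi, hwd _ _ hi.choose_spec]
  have hx_off : ∀ i, (¬ ∃ n : ℤ, (σ ^ n) j = i) → x i = α i := fun i hi => dif_neg hi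
  refine ⟨x, funext <| σ.surjective.forall.mpr fun i => ?_, by simpa using hx_orbit 0⟩
  rw [productActionPerm_apply_apply]
  by_cases hi : ∃ n : ℤ, (σ ^ n) j = i
  · obtain ⟨n, rfl⟩ := hi
    have hσ : σ ((σ ^ n) j) = (σ ^ (1 + n)) j := by rw [zpow_one_add, Perm.mul_apply]
    rw [hx_orbit, hσ, hx_orbit, zpow_one_add, Perm.mul_apply, ← hσ,
      productActionPerm_apply_apply]
  · have hσi : ¬ ∃ n : ℤ, (σ ^ n) j = σ i := by
      rintro ⟨n, hn⟩
      refine hi ⟨-1 + n, ?_⟩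
      rw [zpow_add, Perm.mul_apply, hn, zpow_neg_one, Perm.coe_inv, symm_apply_apply]
    rw [hx_off i hi, hx_off _ hσi, ← productActionPerm_apply_apply, hα]

theorem IsQuasiSemiregularPerm.productActionPerm_eq_one {p : ℕ} (hp : p.Prime)
    (hord : orderOf (productActionPerm h σ) = p)
    (hq : IsQuasiSemiregularPerm (productActionPerm h σ)) : σ = 1 := by
  obtain ⟨α, hfix, -⟩ := hq
  have hα : productActionPerm h σ α = α := (hfix α).mpr rfl
  have : Nontrivial Δ := by
    by_contra hΔ
    rw [not_nontrivial_iff_subsingleton] at hΔ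
    exact hp.one_lt.ne' (hord ▸ orderOf_eq_one_iff.mpr (Subsingleton.elim _ _))
  ext j
  by_contra hj
  obtain ⟨d, hd⟩ := exists_ne (α j)
  have hperiod : MulAction.period σ j = p := by
    have hσp : σ ^ p • j = j := pow_apply_eq_self_of_productActionPerm_pow_eq_one hα
      (hord ▸ pow_orderOf_eq_one _) hd
    have hdvd : MulAction.period σ j ∣ p := MulAction.pow_smul_eq_iff_period_dvd.mp hσp
    exact (hp.eq_one_or_self_of_dvd _ hdvd).resolve_left (by rwa [MulAction.period_eq_one_iff])
  have hstab : ∀ k : ℤ, (σ ^ k) j = j → productActionPerm h σ ^ k = 1 := fun k hk => by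
    rw [← orderOf_dvd_iff_zpow_eq_one, hord, ← hperiod]
    exact MulAction.zpow_smul_eq_iff_period_dvd.mp hk
  obtain ⟨x, hx, hxj⟩ := exists_productActionPerm_apply_eq_self hα hstab (fun _ => d)
  exact hd (hxj ▸ congrFun ((hfix x).mp hx) j)

end ProductAction

theorem stmt11_general {I Δ : Type*} {p : ℕ} (hp : p.Prime)
    (h : I → Equiv.Perm Δ) (σ : Equiv.Perm I)
    (g : Equiv.Perm (I → Δ))
    (hg : ∀ (x : I → Δ) (i : I), g x i = h (σ⁻¹ i) (x (σ⁻¹ i)))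
    (hordg : orderOf g = p) (hq : IsQuasiSemiregularPerm g) :
    σ = 1 ∧ ∀ i : I, IsQuasiSemiregularPerm (h i) := by
  obtain rfl : g = productActionPerm h σ := Equiv.ext fun x => funext (hg x)
  obtain rfl := hq.productActionPerm_eq_one hp hordg
  rw [productActionPerm_one] at hq
  exact ⟨rfl, hq.of_toPerm_pi⟩

theorem stmt11 {I Δ : Type*} [Fintype I] [Fintype Δ] {p : ℕ} (hp : p.Prime)
    (h : I → Equiv.Perm Δ) (σ : Equiv.Perm I)
    (g : Equiv.Perm (I → Δ))
    (hg : ∀ (x : I → Δ) (i : I), g x i = h (σ⁻¹ i) (x (σ⁻¹ i)))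
    (hordg : orderOf g = p) (hq : IsQuasiSemiregularPerm g) :
    σ = 1 ∧ ∀ i : I, IsQuasiSemiregularPerm (h i) :=
  stmt11_general hp h σ g hg hordg hq
end

section
/- Let k be a prime and let T be a nontrivial finite group containing no element of order k. In the direct power T^k (functions from {0,…,k−1} to T), let D = {(t,t,…,t) : t ∈ T} be the diagonal subgroup, and let σ be the cyclic-shift automorphism of T^k sending (t₁,…,t_k) to (t_k,t₁,…,t_{k−1}). Then σ maps D to D, and the induced permutation of the set of right cosets {D·t : t ∈ T^k} is quasi-semiregular of order k with unique fixed point the coset D itself. -/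
/-- The straight diagonal subgroup `D = {(t,…,t) : t ∈ T}` of the direct power `T^k`. -/
def diagonalSubgroup (k : ℕ) (T : Type*) [Group T] : Subgroup (Fin k → T) :=
  (MonoidHom.mk' (fun t => fun _ => t) (fun _ _ => rfl)).range

/-!
A coset `D t` is fixed by the cyclic shift `σ` exactly when `t σ(t)⁻¹ = (c, …, c)` lies
in `D`, i.e. `t (i + 1) = c t i` for all `i`. Going once around the `k`-cycle gives `c ^ k = 1`,
so `c = 1` since `T` has no element of order `k`, and then `t` is itself diagonal. As `σ ^ k = 1`
and (for `T` nontrivial) some coset is moved, the induced permutation has prime order `k`; each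
of its nontrivial powers then generates the same cyclic group and so has the same unique fixed
point.
-/

open Equiv Equiv.Perm Subgroup QuotientGroup

theorem mem_zpowers_zpow_of_prime_orderOf {G : Type*} [Group G] {g : G} {n : ℤ}
    (hg : (orderOf g).Prime) (hn : g ^ n ≠ 1) : g ∈ zpowers (g ^ n) :=
  mem_zpowers_zpow_iff.mpr <| Nat.Coprime.symm <| hg.coprime_iff_not_dvd.mpr fun h =>
    hn (orderOf_dvd_iff_zpow_eq_one.mp (Int.natCast_dvd.mpr h))

theorem Equiv.Perm.apply_eq_self_of_zpow_apply_eq_self {α : Type*} {π : Perm α} {n : ℤ}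
    (hπ : (orderOf π).Prime) (hn : π ^ n ≠ 1) {x : α} (hx : (π ^ n) x = x) : π x = x := by
  obtain ⟨m, hm⟩ := mem_zpowers_iff.mp (mem_zpowers_zpow_of_prime_orderOf hπ hn)
  rw [← hm]
  exact zpow_apply_eq_self_of_apply_eq_self hx m

theorem Equiv.Perm.apply_pow_apply_eq_pow_mul {α M : Type*} [Monoid M] {e : Perm α} {t : α → M}
    {c : M} (h : ∀ a, t (e a) = c * t a) (m : ℕ) (a : α) : t ((e ^ m) a) = c ^ m * t a := by
  induction m with
  | zero => simp
  | succ m ih => rw [pow_succ', mul_apply, h, ih, pow_succ', mul_assoc]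

theorem eq_one_of_pow_eq_one_of_forall_orderOf_ne {M : Type*} [Monoid M] {k : ℕ} (hk : k.Prime)
    (hnok : ∀ c : M, orderOf c ≠ k) {c : M} (hc : c ^ k = 1) : c = 1 :=
  orderOf_eq_one_iff.mp <|
    (hk.eq_one_or_self_of_dvd _ (orderOf_dvd_of_pow_eq_one hc)).resolve_right (hnok c)

theorem finRotate_pow_self (k : ℕ) : finRotate k ^ k = 1 := by
  rcases lt_or_ge k 2 with hk | hk
  · interval_cases k <;> exact Subsingleton.elim _ _
  have horder : orderOf (finRotate k) = k := by
    rw [(isCycle_finRotate_of_le hk).orderOf, support_finRotate_of_le hk, Finset.card_univ,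
      Fintype.card_fin]
  exact orderOf_dvd_iff_pow_eq_one.mp (by rw [horder])

theorem exists_finRotate_pow_apply_eq {k : ℕ} (i j : Fin k) :
    ∃ m : ℕ, (finRotate k ^ m) i = j := by
  rcases lt_or_ge k 2 with hk | hk
  · exact ⟨0, by interval_cases k <;> exact Subsingleton.elim _ _⟩
  have hmoved (x : Fin k) : finRotate k x ≠ x := by
    rw [← mem_support, support_finRotate_of_le hk]
    exact Finset.mem_univ x
  exact (isCycle_finRotate_of_le hk).exists_pow_eq (hmoved i) (hmoved j)

namespace QuotientGroup

variable {G : Type*} [Group G] {H : Subgroup G}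

theorem rightRel_mk_eq_mk_one_iff {g : G} :
    Quotient.mk (rightRel H) g = Quotient.mk (rightRel H) 1 ↔ g ∈ H := by
  rw [Quotient.eq, rightRel_apply, one_mul, inv_mem_iff]

def rightCosetPerm (φ : MulAut G) (hφ : ∀ g, φ g ∈ H ↔ g ∈ H) :
    Perm (Quotient (rightRel H)) :=
  Quotient.congr φ.toEquiv fun a b => by
    rw [rightRel_apply, rightRel_apply, MulEquiv.toEquiv_eq_coe, MulEquiv.coe_toEquiv,
      ← map_inv, ← map_mul, hφ]

variable {φ : MulAut G} {hφ : ∀ g, φ g ∈ H ↔ g ∈ H}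

theorem rightCosetPerm_mk (g : G) :
    rightCosetPerm φ hφ (Quotient.mk _ g) = Quotient.mk _ (φ g) :=
  rfl

theorem rightCosetPerm_pow_mk (n : ℕ) (g : G) :
    (rightCosetPerm φ hφ ^ n) (Quotient.mk _ g) = Quotient.mk _ ((φ ^ n) g) := by
  induction n with
  | zero => rfl
  | succ n ih => rw [pow_succ', mul_apply, ih, rightCosetPerm_mk, pow_succ', MulAut.mul_apply]

theorem rightCosetPerm_mk_eq_mk_iff (g : G) :
    rightCosetPerm φ hφ (Quotient.mk _ g) = Quotient.mk _ g ↔ g * (φ g)⁻¹ ∈ H := by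
  rw [rightCosetPerm_mk, Quotient.eq, rightRel_apply]

end QuotientGroup

section Diagonal

variable {k : ℕ} {T : Type*} [Group T]

theorem mem_diagonalSubgroup_iff {f : Fin k → T} :
    f ∈ diagonalSubgroup k T ↔ ∃ c, ∀ i, f i = c := by
  constructor
  · rintro ⟨c, rfl⟩
    exact ⟨c, fun _ => rfl⟩
  · rintro ⟨c, hc⟩
    exact ⟨c, funext fun i => (hc i).symm⟩

theorem diagonalSubgroup_ne_top (hk : 2 ≤ k) [Nontrivial T] : diagonalSubgroup k T ≠ ⊤ := by
  intro htop
  obtain ⟨a, ha⟩ := exists_ne (1 : T)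
  obtain ⟨c, hc⟩ := mem_diagonalSubgroup_iff.mp
    (htop ▸ mem_top (Pi.mulSingle (⟨0, by omega⟩ : Fin k) a))
  have h0 := hc ⟨0, by omega⟩
  have h1 := hc ⟨1, by omega⟩
  simp only [Pi.mulSingle_eq_same] at h0
  rw [Pi.mulSingle_eq_of_ne (by simp)] at h1
  exact ha (h0.trans h1.symm)

theorem mulAutArrow_mem_diagonalSubgroup_iff (e : Perm (Fin k)) (f : Fin k → T) :
    mulAutArrow e f ∈ diagonalSubgroup k T ↔ f ∈ diagonalSubgroup k T := by
  rw [mem_diagonalSubgroup_iff, mem_diagonalSubgroup_iff]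
  change (∃ c, ∀ i, f (e.symm i) = c) ↔ ∃ c, ∀ i, f i = c
  constructor
  · rintro ⟨c, hc⟩
    exact ⟨c, fun i => by simpa using hc (e i)⟩
  · rintro ⟨c, hc⟩
    exact ⟨c, fun i => hc _⟩

variable (k T) in
def cyclicShift : MulAut (Fin k → T) :=
  mulAutArrow (finRotate k)

theorem cyclicShift_apply (t : Fin k → T) (i : Fin k) :
    cyclicShift k T t i = t ((finRotate k).symm i) :=
  rfl

theorem cyclicShift_mem_diagonalSubgroup_iff (t : Fin k → T) :
    cyclicShift k T t ∈ diagonalSubgroup k T ↔ t ∈ diagonalSubgroup k T :=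
  mulAutArrow_mem_diagonalSubgroup_iff _ t

theorem cyclicShift_pow_self : cyclicShift k T ^ k = 1 := by
  rw [cyclicShift, ← map_pow, finRotate_pow_self, map_one]

theorem mul_inv_cyclicShift_mem_diagonalSubgroup_iff (hk : k.Prime)
    (hnok : ∀ c : T, orderOf c ≠ k) {t : Fin k → T} :
    t * (cyclicShift k T t)⁻¹ ∈ diagonalSubgroup k T ↔ t ∈ diagonalSubgroup k T := by
  refine ⟨fun h => ?_, fun h => mul_mem h (inv_mem
    ((cyclicShift_mem_diagonalSubgroup_iff t).mpr h))⟩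
  obtain ⟨c, hc⟩ := mem_diagonalSubgroup_iff.mp h
  have hstep (i : Fin k) : t (finRotate k i) = c * t i := by
    rw [← hc (finRotate k i), Pi.mul_apply, Pi.inv_apply, cyclicShift_apply, symm_apply_apply,
      inv_mul_cancel_right]
  have i₀ : Fin k := ⟨0, hk.pos⟩
  have hc1 : c = 1 := by
    have hround := apply_pow_apply_eq_pow_mul hstep k i₀
    rw [finRotate_pow_self, one_apply] at hround
    exact eq_one_of_pow_eq_one_of_forall_orderOf_ne hk hnok (mul_eq_right.mp hround.symm)
  refine mem_diagonalSubgroup_iff.mpr ⟨t i₀, fun i => ?_⟩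
  obtain ⟨m, rfl⟩ := exists_finRotate_pow_apply_eq i₀ i
  rw [apply_pow_apply_eq_pow_mul hstep, hc1, one_pow, one_mul]

end Diagonal

section CosetShift

variable {k : ℕ} {T : Type*} [Group T]

variable (k T) in
def diagonalCosetShift : Perm (Quotient (rightRel (diagonalSubgroup k T))) :=
  rightCosetPerm (cyclicShift k T) cyclicShift_mem_diagonalSubgroup_iff

theorem diagonalCosetShift_apply_eq_self_iff (hk : k.Prime) (hnok : ∀ c : T, orderOf c ≠ k)
    (B : Quotient (rightRel (diagonalSubgroup k T))) :
    diagonalCosetShift k T B = B ↔ B = Quotient.mk _ 1 := by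
  induction B using Quotient.ind with
  | _ t => rw [diagonalCosetShift, rightCosetPerm_mk_eq_mk_iff,
      mul_inv_cyclicShift_mem_diagonalSubgroup_iff hk hnok, rightRel_mk_eq_mk_one_iff]

theorem orderOf_diagonalCosetShift (hk : k.Prime) (hnok : ∀ c : T, orderOf c ≠ k)
    [Nontrivial T] : orderOf (diagonalCosetShift k T) = k := by
  have := Fact.mk hk
  refine orderOf_eq_prime ?_ fun h => diagonalSubgroup_ne_top (T := T) hk.two_le ?_
  · ext B
    induction B using Quotient.ind with
    | _ t => rw [diagonalCosetShift, rightCosetPerm_pow_mk, cyclicShift_pow_self]; rfl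
  · refine (eq_top_iff' _).mpr fun t => rightRel_mk_eq_mk_one_iff.mp ?_
    rw [← diagonalCosetShift_apply_eq_self_iff hk hnok, h, one_apply]

end CosetShift

theorem stmt12_general {k : ℕ} (hk : k.Prime) (T : Type*) [Group T] [Nontrivial T]
    (hnok : ∀ t : T, orderOf t ≠ k) :
    (∀ f ∈ diagonalSubgroup k T,
        (fun i => f ((finRotate k).symm i)) ∈ diagonalSubgroup k T) ∧
    ∃ π : Equiv.Perm (Quotient (QuotientGroup.rightRel (diagonalSubgroup k T))),
      (∀ t : Fin k → T,
        π (Quotient.mk (QuotientGroup.rightRel (diagonalSubgroup k T)) t) =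
          Quotient.mk (QuotientGroup.rightRel (diagonalSubgroup k T))
            (fun i => t ((finRotate k).symm i))) ∧
      orderOf π = k ∧
      (∀ B, π B = B ↔
        B = Quotient.mk (QuotientGroup.rightRel (diagonalSubgroup k T)) 1) ∧
      ∀ (n : ℤ) (B),
        B ≠ Quotient.mk (QuotientGroup.rightRel (diagonalSubgroup k T)) 1 →
        (π ^ n) B = B → π ^ n = 1 := by
  have horder := orderOf_diagonalCosetShift hk hnok (T := T)
  have hfix := diagonalCosetShift_apply_eq_self_iff hk hnok (T := T)
  refine ⟨fun f hf => (cyclicShift_mem_diagonalSubgroup_iff f).mpr hf,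
    diagonalCosetShift k T, fun t => rfl, horder, hfix, fun n B hB hpow => ?_⟩
  by_contra hn
  exact hB ((hfix B).mp (apply_eq_self_of_zpow_apply_eq_self (by rwa [horder]) hn hpow))

theorem stmt12 {k : ℕ} (hk : k.Prime) (T : Type*) [Group T] [Finite T] [Nontrivial T]
    (hnok : ∀ t : T, orderOf t ≠ k) :
    (∀ f ∈ diagonalSubgroup k T,
        (fun i => f ((finRotate k).symm i)) ∈ diagonalSubgroup k T) ∧
    ∃ π : Equiv.Perm (Quotient (QuotientGroup.rightRel (diagonalSubgroup k T))),
      (∀ t : Fin k → T,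
        π (Quotient.mk (QuotientGroup.rightRel (diagonalSubgroup k T)) t) =
          Quotient.mk (QuotientGroup.rightRel (diagonalSubgroup k T))
            (fun i => t ((finRotate k).symm i))) ∧
      orderOf π = k ∧
      (∀ B, π B = B ↔
        B = Quotient.mk (QuotientGroup.rightRel (diagonalSubgroup k T)) 1) ∧
      ∀ (n : ℤ) (B),
        B ≠ Quotient.mk (QuotientGroup.rightRel (diagonalSubgroup k T)) 1 →
        (π ^ n) B = B → π ^ n = 1 :=
  stmt12_general hk T hnok
end

section
/- Let n and k be positive integers with 2k < n and let p be a prime. Then the symmetric group Sym(n) contains a quasi-semiregular element of order p in its action on the set of k-element subsets of {1,…,n} if and only if k < p and p divides n − k. -/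
/-!
If `g` has prime order `p`, a set is `g`-invariant exactly when it is a union of fixed points of
`g` and of `p`-cycles of `g`. Suppose `A` is the only invariant `k`-set. Then no invariant part of
`A` can be exchanged for an invariant set of the same size outside `A`. If `p ≤ k`, both `A` and
its complement (of size `n - k > k`) contain invariant `p`-sets, so `k < p`; hence `A` consists of
fixed points, and by exchanging single fixed points `A` is the whole fixed-point set. The support
of `g` is a union of `p`-cycles of total size `n - k`. Conversely, a product of `(n - k) / p`
disjoint `p`-cycles fixes only its `k` fixed points among `k`-sets, and a power `g ^ m` with
`p ∤ m` generates `⟨g⟩`, so it has the same invariant sets as `g`.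
-/

open Equiv Finset
open scoped Pointwise

section GroupAction

variable {G β : Type*} [Group G] [MulAction G β]

theorem mem_zpowers_zpow_of_not_dvd {g : G} {p : ℕ} (hp : p.Prime) (hg : orderOf g = p) {m : ℤ}
    (hm : ¬ (p : ℤ) ∣ m) : g ∈ Subgroup.zpowers (g ^ m) := by
  rw [mem_zpowers_zpow_iff, hg, Int.gcd_comm]
  exact Int.isCoprime_iff_gcd_eq_one.mp
    ((Nat.prime_iff_prime_int.mp hp).coprime_iff_not_dvd.mpr hm)

theorem smul_eq_self_of_zpow_smul_eq_self {g : G} {p : ℕ} (hp : p.Prime) (hg : orderOf g = p)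
    {m : ℤ} (hm : ¬ (p : ℤ) ∣ m) {b : β} (h : g ^ m • b = b) : g • b = b := by
  have : Subgroup.zpowers (g ^ m) ≤ MulAction.stabilizer G b :=
    Subgroup.zpowers_le.mpr (MulAction.mem_stabilizer_iff.mpr h)
  exact MulAction.mem_stabilizer_iff.mp (this (mem_zpowers_zpow_of_not_dvd hp hg hm))

variable [DecidableEq β]

theorem Finset.smul_finset_eq_self_of_forall_smul_mem {a : G} {s : Finset β}
    (h : ∀ x ∈ s, a • x ∈ s) : a • s = s :=
  eq_of_subset_of_card_le (image_subset_iff.mpr h) (card_smul_finset a s).ge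

theorem Finset.smul_finset_sdiff_union_eq_self {a : G} {s t u : Finset β} (hs : a • s = s)
    (ht : a • t = t) (hu : a • u = u) : a • (s \ t ∪ u) = s \ t ∪ u := by
  rw [smul_finset_union, smul_finset_sdiff, hs, ht, hu]

end GroupAction

namespace Equiv.Perm

variable {α : Type*} [DecidableEq α]

theorem image_eq_smul_finset (g : Perm α) (s : Finset α) : s.image ⇑g = g • s :=
  rfl

def IsUniqueFixedOfCard (g : Perm α) (k : ℕ) (A : Finset α) : Prop :=
  #A = k ∧ ∀ B : Finset α, #B = k → (g • B = B ↔ B = A)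

namespace IsUniqueFixedOfCard

variable {g : Perm α} {k : ℕ} {A : Finset α}

theorem smul_eq_self (h : IsUniqueFixedOfCard g k A) : g • A = A :=
  (h.2 A h.1).mpr rfl

theorem eq_empty_of_exchange (h : IsUniqueFixedOfCard g k A) {t u : Finset α} (htA : t ⊆ A)
    (huA : _root_.Disjoint A u) (ht : g • t = t) (hu : g • u = u) (htu : #t = #u) : u = ∅ := by
  have htk : #t ≤ k := h.1 ▸ card_le_card htA
  have hcard : #(A \ t ∪ u) = k := by
    rw [card_union_of_disjoint (huA.mono_left sdiff_subset), card_sdiff_of_subset htA, h.1]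
    omega
  have hexch : A \ t ∪ u = A :=
    (h.2 _ hcard).mp (smul_finset_sdiff_union_eq_self h.smul_eq_self ht hu)
  exact le_bot_iff.mp (huA (hexch ▸ subset_union_right) le_rfl)

end IsUniqueFixedOfCard

variable [Fintype α] {g : Perm α} {p : ℕ}

theorem smul_finset_eq_self_of_subset_compl_support {s : Finset α} (h : s ⊆ g.supportᶜ) :
    g • s = s :=
  smul_finset_eq_self_of_forall_smul_mem fun x hx => by
    rw [Perm.smul_def, notMem_support.mp (mem_compl.mp (h hx))]
    exact hx

theorem smul_finset_support_cycleOf (g : Perm α) (x : α) :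
    g • (g.cycleOf x).support = (g.cycleOf x).support :=
  smul_finset_eq_self_of_forall_smul_mem fun y hy => by
    rw [mem_support_cycleOf_iff] at hy ⊢
    exact ⟨sameCycle_apply_right.mpr hy.1, hy.2⟩

theorem support_cycleOf_subset {s : Finset α} (hs : g • s = s) {x : α} (hx : x ∈ s) :
    (g.cycleOf x).support ⊆ s := by
  intro y hy
  obtain ⟨i, rfl⟩ := (mem_support_cycleOf_iff.mp hy).1
  have hi : g ^ i ∈ MulAction.stabilizer (Perm α) s :=
    Subgroup.zpow_mem _ (MulAction.mem_stabilizer_iff.mpr hs) i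
  rw [← MulAction.mem_stabilizer_iff.mp hi]
  exact smul_mem_smul_finset hx

theorem card_support_cycleOf_of_orderOf_eq_prime (hp : p.Prime) (hg : orderOf g = p) {x : α}
    (hx : g x ≠ x) : #(g.cycleOf x).support = p := by
  have hdvd : #(g.cycleOf x).support ∣ p :=
    hg ▸ (isCycle_cycleOf g hx).orderOf ▸ orderOf_cycleOf_dvd_orderOf g x
  have htwo : 2 ≤ #(g.cycleOf x).support := two_le_card_support_cycleOf_iff.mpr hx
  exact (hp.eq_one_or_self_of_dvd _ hdvd).resolve_left (by omega)

theorem subset_compl_support_of_card_lt (hp : p.Prime) (hg : orderOf g = p) {s : Finset α}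
    (hs : g • s = s) (hsp : #s < p) : s ⊆ g.supportᶜ := by
  intro x hx
  rw [mem_compl, notMem_support]
  by_contra hgx
  have := card_le_card (support_cycleOf_subset hs hx)
  rw [card_support_cycleOf_of_orderOf_eq_prime hp hg hgx] at this
  omega

theorem exists_subset_smul_finset_eq_self_card_eq (hp : p.Prime) (hg : orderOf g = p)
    {s : Finset α} (hs : g • s = s) (hps : p ≤ #s) : ∃ t ⊆ s, g • t = t ∧ #t = p := by
  by_cases hfix : s ⊆ g.supportᶜ
  · obtain ⟨t, hts, ht⟩ := exists_subset_card_eq hps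
    exact ⟨t, hts, smul_finset_eq_self_of_subset_compl_support (hts.trans hfix), ht⟩
  · obtain ⟨x, hxs, hx⟩ := not_subset.mp hfix
    rw [mem_compl, not_not, mem_support] at hx
    exact ⟨_, support_cycleOf_subset hs hxs, smul_finset_support_cycleOf g x,
      card_support_cycleOf_of_orderOf_eq_prime hp hg hx⟩

theorem prime_dvd_card_support (hp : p.Prime) (hg : orderOf g = p) : p ∣ #g.support := by
  obtain ⟨c, hc⟩ := cycleType_prime_order (hg ▸ hp : (orderOf g).Prime)
  rw [← sum_cycleType, hc, Multiset.sum_replicate, hg, smul_eq_mul]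
  exact dvd_mul_left p (c + 1)

theorem exists_orderOf_eq_card_support_eq (hp : p.Prime) {c : ℕ} (hc : 0 < c)
    (hcp : c * p ≤ Fintype.card α) : ∃ g : Perm α, orderOf g = p ∧ #g.support = c * p := by
  have := Fact.mk hp
  obtain ⟨g, hg⟩ := (exists_with_cycleType_iff (α := α) (m := Multiset.replicate c p)).mpr
    ⟨by simpa using hcp, fun a ha => (Multiset.eq_of_mem_replicate ha) ▸ hp.two_le⟩
  refine ⟨g, orderOf_eq_prime ?_ ?_, by rw [← sum_cycleType, hg]; simp⟩
  · exact pow_prime_eq_one_iff.mpr fun a ha => Multiset.eq_of_mem_replicate (hg ▸ ha)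
  · rw [Ne, ← cycleType_eq_zero, hg]
    exact fun h => hc.ne' (by simpa using congrArg Multiset.card h)

namespace IsUniqueFixedOfCard

variable {k : ℕ} {A : Finset α}

theorem lt_prime (h : IsUniqueFixedOfCard g k A) (hp : p.Prime) (hg : orderOf g = p)
    (hkn : 2 * k < Fintype.card α) : k < p := by
  by_contra! hpk
  obtain ⟨t, htA, ht, htp⟩ :=
    exists_subset_smul_finset_eq_self_card_eq hp hg h.smul_eq_self (h.1 ▸ hpk)
  have hAc : g • Aᶜ = Aᶜ := by
    rw [compl_eq_univ_sdiff, smul_finset_sdiff, smul_finset_univ, h.smul_eq_self]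
  obtain ⟨u, huA, hu, hup⟩ :=
    exists_subset_smul_finset_eq_self_card_eq hp hg hAc (by rw [card_compl, h.1]; omega)
  have hu0 := h.eq_empty_of_exchange htA (disjoint_of_subset_right huA disjoint_compl_right) ht hu
    (htp.trans hup.symm)
  rw [hu0, card_empty] at hup
  exact hp.ne_zero hup.symm

theorem eq_compl_support (h : IsUniqueFixedOfCard g k A) (hk : 0 < k) (hp : p.Prime)
    (hg : orderOf g = p) (hkn : 2 * k < Fintype.card α) : A = g.supportᶜ := by
  have hA : A ⊆ g.supportᶜ :=
    subset_compl_support_of_card_lt hp hg h.smul_eq_self (h.1 ▸ h.lt_prime hp hg hkn)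
  refine hA.antisymm fun b hb => ?_
  by_contra hbA
  obtain ⟨a, ha⟩ := card_pos.mp (h.1 ▸ hk)
  have := h.eq_empty_of_exchange (singleton_subset_iff.mpr ha) (disjoint_singleton_right.mpr hbA)
    (smul_finset_eq_self_of_subset_compl_support (singleton_subset_iff.mpr (hA ha)))
    (smul_finset_eq_self_of_subset_compl_support (singleton_subset_iff.mpr hb)) rfl
  exact singleton_ne_empty b this

theorem lt_prime_and_prime_dvd (h : IsUniqueFixedOfCard g k A) (hk : 0 < k) (hp : p.Prime)
    (hg : orderOf g = p) (hkn : 2 * k < Fintype.card α) :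
    k < p ∧ p ∣ Fintype.card α - k := by
  have hsupp : #g.support = Fintype.card α - k := by
    have := card_compl g.support
    rw [← h.eq_compl_support hk hp hg hkn, h.1] at this
    have := card_le_univ g.support
    omega
  exact ⟨h.lt_prime hp hg hkn, hsupp ▸ prime_dvd_card_support hp hg⟩

end IsUniqueFixedOfCard

theorem exists_isUniqueFixedOfCard {k : ℕ} (hp : p.Prime) (hkp : k < p)
    (hkn : k < Fintype.card α) (hdvd : p ∣ Fintype.card α - k) :
    ∃ g : Perm α, orderOf g = p ∧ IsUniqueFixedOfCard g k g.supportᶜ := by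
  obtain ⟨c, hc⟩ := hdvd
  have hcpos : 0 < c := Nat.pos_of_ne_zero fun h0 => by simp [h0] at hc; omega
  obtain ⟨g, hg, hsupp⟩ :=
    exists_orderOf_eq_card_support_eq (α := α) hp hcpos (by rw [mul_comm]; omega)
  have hcard : #g.supportᶜ = k := by rw [card_compl, hsupp, mul_comm]; omega
  refine ⟨g, hg, hcard, fun B hB => ⟨fun hgB => ?_, ?_⟩⟩
  · exact eq_of_subset_of_card_le (subset_compl_support_of_card_lt hp hg hgB (hB ▸ hkp))
      (by rw [hB, hcard])
  · rintro rfl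
    exact smul_finset_eq_self_of_subset_compl_support subset_rfl

end Equiv.Perm

theorem stmt13 {n k : ℕ} (hk : 0 < k) (hkn : 2 * k < n) {p : ℕ} (hp : p.Prime) :
    (∃ g : Equiv.Perm (Fin n), orderOf g = p ∧
      ∃ A : Finset (Fin n), A.card = k ∧
        (∀ B : Finset (Fin n), B.card = k → (B.image ⇑g = B ↔ B = A)) ∧
        (∀ (m : ℤ) (B : Finset (Fin n)), B.card = k → B ≠ A → B.image ⇑(g ^ m) = B →
          ∀ C : Finset (Fin n), C.card = k → C.image ⇑(g ^ m) = C)) ↔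
      (k < p ∧ p ∣ n - k) := by
  simp only [Perm.image_eq_smul_finset]
  constructor
  · rintro ⟨g, hg, A, hA, huniq, -⟩
    simpa using Perm.IsUniqueFixedOfCard.lt_prime_and_prime_dvd ⟨hA, huniq⟩ hk hp hg
      (by simpa using hkn)
  · rintro ⟨hkp, hdvd⟩
    obtain ⟨g, hg, hA, huniq⟩ := Perm.exists_isUniqueFixedOfCard (α := Fin n) hp hkp
      (by simp only [Fintype.card_fin]; omega) (by simpa using hdvd)
    refine ⟨g, hg, _, hA, huniq, fun m B hB hBA hgB C _ => ?_⟩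
    by_cases hm : (p : ℤ) ∣ m
    · rw [orderOf_dvd_iff_zpow_eq_one.mp (hg ▸ hm), one_smul]
    · exact absurd ((huniq B hB).mp (smul_eq_self_of_zpow_smul_eq_self hp hg hm hgB)) hBA
end

section
/- Let n and k be positive integers with 2k < n, let p be a prime, and suppose g ∈ Sym(n) has order p and is quasi-semiregular in the action of Sym(n) on the set of k-element subsets of {1,…,n}. Then g has exactly k fixed points in {1,…,n}, every other orbit of ⟨g⟩ on {1,…,n} has length p (so g has cycle type 1^k p^{(n−k)/p}, and in particular p divides n − k and k < p), and the unique k-element subset fixed setwise by g is precisely the set of fixed points of g in {1,…,n}. -/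
/-!
The `g`-invariant sets are the unions of `⟨g⟩`-orbits, which have size `1` or `p`. Exchanging an
invariant part of `A` for an invariant set of the same size outside `A` would give a second
invariant `k`-set. The complement of `A` has more than `k` points, so it contains an invariant
`p`-set; hence `A` contains none, which forces `k < p` and makes every point of `A` fixed. Finally a
fixed point outside `A` could be exchanged with a point of `A`.
-/

open Finset

namespace Equiv.Perm

variable {α : Type*} [DecidableEq α] {g : Perm α} {A B C : Finset α} {a x : α}

theorem image_eq_self_of_forall_mem (h : ∀ x ∈ B, g x ∈ B) : B.image g = B :=
  eq_of_subset_of_card_le (image_subset_iff.2 h) (card_image_of_injective _ g.injective).ge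

theorem image_eq_self_of_forall_fixed (h : ∀ x ∈ B, g x = x) : B.image g = B :=
  image_eq_self_of_forall_mem fun x hx => (h x hx).symm ▸ hx

theorem apply_mem_iff_of_image_eq_self (h : B.image g = B) : g x ∈ B ↔ x ∈ B := by
  conv_lhs => rw [← h]
  exact g.injective.mem_finset_image

theorem image_sdiff_eq_self (hB : B.image g = B) (hC : C.image g = C) :
    (C \ B).image g = C \ B := by
  rw [image_sdiff _ _ g.injective, hB, hC]

section Fintype

variable [Fintype α]

theorem image_compl_eq_self (hB : B.image g = B) : Bᶜ.image g = Bᶜ := by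
  simpa only [compl_eq_univ_sdiff] using
    image_sdiff_eq_self hB (image_univ_of_surjective g.surjective)

theorem image_support_cycleOf : (g.cycleOf a).support.image g = (g.cycleOf a).support :=
  image_eq_self_of_forall_mem fun x hx => by
    rw [mem_support_cycleOf_iff] at hx ⊢
    exact ⟨sameCycle_apply_right.2 hx.1, hx.2⟩

theorem support_cycleOf_subset_s14 (hB : B.image g = B) (ha : a ∈ B) :
    (g.cycleOf a).support ⊆ B := by
  intro x hx
  obtain ⟨i, -, rfl⟩ := (mem_support_cycleOf_iff.1 hx).1.exists_pow_eq'
  clear hx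
  induction i with
  | zero => exact ha
  | succ i ih => rwa [pow_succ', mul_apply, apply_mem_iff_of_image_eq_self hB]

theorem card_support_cycleOf_of_orderOf_prime (hg : (orderOf g).Prime) (ha : g a ≠ a) :
    #(g.cycleOf a).support = orderOf g := by
  have hcyc := isCycle_cycleOf g ha
  rw [← hcyc.orderOf]
  refine (hg.eq_one_or_self_of_dvd _ (orderOf_cycleOf_dvd_orderOf g a)).resolve_left ?_
  rw [orderOf_eq_one_iff]
  exact hcyc.ne_one

theorem card_sameCycle_of_orderOf_prime (hg : (orderOf g).Prime) (ha : g a ≠ a) :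
    Nat.card {b // g.SameCycle a b} = orderOf g := by
  rw [← card_support_cycleOf_of_orderOf_prime hg ha, ← Nat.card_eq_finsetCard]
  exact Nat.card_congr (Equiv.subtypeEquivRight fun b => by
    rw [mem_support_cycleOf_iff, and_iff_left (mem_support.2 ha)])

theorem exists_subset_image_eq_self_card_eq_orderOf (hg : (orderOf g).Prime)
    (hC : C.image g = C) (hcard : orderOf g ≤ #C) :
    ∃ Q ⊆ C, Q.image g = Q ∧ #Q = orderOf g := by
  by_cases hfix : ∀ x ∈ C, g x = x
  · obtain ⟨Q, hQC, hQ⟩ := exists_subset_card_eq hcard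
    exact ⟨Q, hQC, image_eq_self_of_forall_fixed fun x hx => hfix x (hQC hx), hQ⟩
  · push Not at hfix
    obtain ⟨b, hbC, hb⟩ := hfix
    exact ⟨_, support_cycleOf_subset_s14 hC hbC, image_support_cycleOf,
      card_support_cycleOf_of_orderOf_prime hg hb⟩

theorem orderOf_dvd_card_sub_card_fixed (hg : (orderOf g).Prime) :
    orderOf g ∣ Fintype.card α - #(univ.filter fun x => g x = x) := by
  have := Fact.mk hg
  have h := card_compl_support_modEq (p := orderOf g) (n := 1) (σ := g)
    (by simp [pow_orderOf_eq_one])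
  have hcompl : g.supportᶜ = univ.filter fun x => g x = x := by ext; simp
  rw [hcompl] at h
  exact (Nat.modEq_iff_dvd' (card_le_univ _)).1 h

end Fintype

variable (g A) in
def IsUniqueInvariant : Prop :=
  A.image g = A ∧ ∀ B : Finset α, #B = #A → B.image g = B → B = A

namespace IsUniqueInvariant

theorem eq_empty_of_disjoint (hA : IsUniqueInvariant g A) {R Q : Finset α} (hRA : R ⊆ A)
    (hR : R.image g = R) (hQA : _root_.Disjoint Q A) (hQ : Q.image g = Q) (hcard : #Q = #R) :
    Q = ∅ := by
  -- `A \ R ∪ Q` is another invariant set of the same size as `A`.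
  have hdisj : _root_.Disjoint (A \ R) Q := hQA.symm.mono_left sdiff_subset
  have hswap : A \ R ∪ Q = A := hA.2 _
    (by rw [card_union_of_disjoint hdisj, card_sdiff_of_subset hRA, hcard,
      Nat.sub_add_cancel (card_le_card hRA)])
    (by rw [image_union, image_sdiff_eq_self hR hA.1, hQ])
  exact hQA.eq_bot_of_le (hswap ▸ subset_union_right)

variable [Fintype α]

theorem card_lt_orderOf (hA : IsUniqueInvariant g A) (hg : (orderOf g).Prime)
    (hcard : 2 * #A < Fintype.card α) : #A < orderOf g := by
  by_contra! hle
  obtain ⟨R, hRA, hR, hRcard⟩ := exists_subset_image_eq_self_card_eq_orderOf hg hA.1 hle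
  obtain ⟨Q, hQA, hQ, hQcard⟩ := exists_subset_image_eq_self_card_eq_orderOf hg
    (image_compl_eq_self hA.1) (by rw [card_compl]; omega)
  have hQempty := hA.eq_empty_of_disjoint hRA hR (disjoint_of_subset_left hQA disjoint_compl_left)
    hQ (hQcard.trans hRcard.symm)
  rw [hQempty, card_empty] at hQcard
  exact hg.ne_zero hQcard.symm

theorem forall_mem_fixed (hA : IsUniqueInvariant g A) (hg : (orderOf g).Prime)
    (hcard : 2 * #A < Fintype.card α) : ∀ a ∈ A, g a = a := by
  intro a ha
  by_contra hmoved
  have hle := card_le_card (support_cycleOf_subset_s14 hA.1 ha)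
  rw [card_support_cycleOf_of_orderOf_prime hg hmoved] at hle
  exact (hA.card_lt_orderOf hg hcard).not_ge hle

theorem eq_filter_fixed (hA : IsUniqueInvariant g A) (hg : (orderOf g).Prime)
    (hcard : 2 * #A < Fintype.card α) (hne : A.Nonempty) :
    A = univ.filter fun x => g x = x := by
  have hfixed := hA.forall_mem_fixed hg hcard
  refine Subset.antisymm (fun a ha => mem_filter.2 ⟨mem_univ _, hfixed a ha⟩) fun x hx => ?_
  by_contra hxA
  obtain ⟨a, ha⟩ := hne
  have hx_empty := hA.eq_empty_of_disjoint (singleton_subset_iff.2 ha)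
    (by rw [image_singleton, hfixed a ha]) (disjoint_singleton_left.2 hxA)
    (by rw [image_singleton, (mem_filter.1 hx).2]) rfl
  exact singleton_ne_empty x hx_empty

end IsUniqueInvariant

end Equiv.Perm

theorem stmt14_general {n k : ℕ} (hk : 0 < k) (hkn : 2 * k < n) {p : ℕ} (hp : p.Prime)
    (g : Equiv.Perm (Fin n)) (hord : orderOf g = p)
    (A : Finset (Fin n)) (hA : A.card = k)
    (hfix : ∀ B : Finset (Fin n), B.card = k → (B.image ⇑g = B ↔ B = A)) :
    (Finset.univ.filter fun a => g a = a).card = k ∧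
    k < p ∧ p ∣ n - k ∧
    (∀ a : Fin n, g a ≠ a → Nat.card {b : Fin n // ∃ m : ℤ, (g ^ m) a = b} = p) ∧
    A = Finset.univ.filter fun a => g a = a := by
  subst hord hA
  have hunique : Equiv.Perm.IsUniqueInvariant g A :=
    ⟨(hfix A rfl).2 rfl, fun B hB => (hfix B hB).1⟩
  have hcard : 2 * #A < Fintype.card (Fin n) := by rwa [Fintype.card_fin]
  have hfixed := hunique.eq_filter_fixed hp hcard (card_pos.1 hk)
  refine ⟨hfixed ▸ rfl, hunique.card_lt_orderOf hp hcard, ?_,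
    fun a ha => Equiv.Perm.card_sameCycle_of_orderOf_prime hp ha, hfixed⟩
  simpa only [← hfixed, Fintype.card_fin] using Equiv.Perm.orderOf_dvd_card_sub_card_fixed hp

theorem stmt14 {n k : ℕ} (hk : 0 < k) (hkn : 2 * k < n) {p : ℕ} (hp : p.Prime)
    (g : Equiv.Perm (Fin n)) (hord : orderOf g = p)
    (A : Finset (Fin n)) (hA : A.card = k)
    (hfix : ∀ B : Finset (Fin n), B.card = k → (B.image ⇑g = B ↔ B = A))
    (hsemi : ∀ (m : ℤ) (B : Finset (Fin n)), B.card = k → B ≠ A → B.image ⇑(g ^ m) = B →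
      ∀ C : Finset (Fin n), C.card = k → C.image ⇑(g ^ m) = C) :
    (Finset.univ.filter fun a => g a = a).card = k ∧
    k < p ∧ p ∣ n - k ∧
    (∀ a : Fin n, g a ≠ a → Nat.card {b : Fin n // ∃ m : ℤ, (g ^ m) a = b} = p) ∧
    A = Finset.univ.filter fun a => g a = a :=
  stmt14_general hk hkn hp g hord A hA hfix
end

section
/- Let n and k be positive integers with 2k < n. Then the alternating group Alt(n) contains an element of order 2 that is quasi-semiregular in the action on the set of k-element subsets of {1,…,n} if and only if k = 1 and n ≡ 1 (mod 4). -/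
open Equiv Equiv.Perm Finset
lemma aux_invol_alt {n : ℕ} {g : Equiv.Perm (Fin n)} (hord : orderOf g = 2) :
    (g ∈ alternatingGroup (Fin n) ↔ g.support.card % 4 = 0) := by
  obtain ⟨m, hm⟩ := Equiv.Perm.cycleType_prime_order (σ := g) (by rw [hord]; exact Nat.prime_two)
  rw [hord] at hm
  have hsum := g.sum_cycleType
  rw [hm, Multiset.sum_replicate, smul_eq_mul] at hsum
  have hsign := g.sign_of_cycleType
  rw [hm, Multiset.sum_replicate, Multiset.card_replicate, smul_eq_mul] at hsign
  rw [Equiv.Perm.mem_alternatingGroup, hsign, ← hsum]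
  constructor
  · intro h
    have : Even ((m+1) * 2 + (m+1)) := by
      by_contra hodd
      rw [Nat.not_even_iff_odd] at hodd
      rw [Odd.neg_one_pow hodd] at h
      exact absurd h (by decide)
    rw [Nat.even_iff] at this
    omega
  · intro h
    have : Even ((m+1) * 2 + (m+1)) := by rw [Nat.even_iff]; omega
    exact Even.neg_one_pow this
lemma aux_swap {n : ℕ} (g : Equiv.Perm (Fin n)) (A D E : Finset (Fin n))
    (hD : D ⊆ A) (hE : Disjoint E A) (hcard : D.card = E.card) (hEne : E.Nonempty)
    (hA : A.image ⇑g = A) (hDinv : D.image ⇑g = D) (hEinv : E.image ⇑g = E) :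
    ∃ B : Finset (Fin n), B.card = A.card ∧ B ≠ A ∧ B.image ⇑g = B := by
  refine ⟨(A \ D) ∪ E, ?_, ?_, ?_⟩
  · rw [Finset.card_union_of_disjoint (hE.mono_right (Finset.sdiff_subset)).symm,
      Finset.card_sdiff_of_subset hD]
    have := Finset.card_le_card hD
    omega
  · obtain ⟨e, he⟩ := hEne
    intro heq
    have : e ∈ A := heq ▸ (Finset.mem_union_right _ he)
    exact (Finset.disjoint_left.mp hE he) this
  · rw [Finset.image_union, Finset.image_sdiff _ _ g.injective, hA, hDinv, hEinv]

lemma aux_k_one {n k : ℕ} (hk : 0 < k) (hkn : 2 * k < n) (g : Equiv.Perm (Fin n))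
    (hord : orderOf g = 2) (A : Finset (Fin n)) (hAcard : A.card = k)
    (hfix : ∀ B : Finset (Fin n), B.card = k → (B.image ⇑g = B ↔ B = A)) : k = 1 := by
  by_contra hk1
  have hk2 : 2 ≤ k := by omega
  have hAinv : A.image ⇑g = A := (hfix A hAcard).mpr rfl
  have gg : ∀ x, g (g x) = x := by
    intro x
    have h2 : g ^ 2 = 1 := by rw [← hord]; exact pow_orderOf_eq_one g
    have := congrArg (fun p : Equiv.Perm (Fin n) => p x) h2
    simpa [pow_succ, Equiv.Perm.mul_apply] using this
  have hmemA : ∀ x ∈ A, g x ∈ A := fun x hx => hAinv ▸ Finset.mem_image_of_mem _ hx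
  have hmemC : ∀ x, x ∉ A → g x ∉ A := by
    intro x hx hgx
    exact hx (by simpa [gg] using hmemA _ hgx)
  have pairinv : ∀ x : Fin n, ({x, g x} : Finset (Fin n)).image ⇑g = {x, g x} := by
    intro x
    rw [Finset.image_insert, Finset.image_singleton, gg, Finset.pair_comm]
  have fixpairinv : ∀ x y : Fin n, g x = x → g y = y →
      ({x, y} : Finset (Fin n)).image ⇑g = {x, y} := by
    intro x y hx hy
    rw [Finset.image_insert, Finset.image_singleton, hx, hy]
  have compl_card : k < Aᶜ.card := by
    rw [Finset.card_compl, hAcard]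
    simp only [Fintype.card_fin]
    omega
  have getB : ∀ D E : Finset (Fin n), D ⊆ A → Disjoint E A → D.card = E.card → E.Nonempty →
      D.image ⇑g = D → E.image ⇑g = E → False := by
    intro D E h1 h2 h3 h4 h5 h6
    obtain ⟨B, hB1, hB2, hB3⟩ := aux_swap g A D E h1 h2 h3 h4 hAinv h5 h6
    exact hB2 ((hfix B (hB1.trans hAcard)).mp hB3)
  by_cases hAs : (A.filter fun x => g x ≠ x).Nonempty
  · obtain ⟨x, hx⟩ := hAs
    rw [Finset.mem_filter] at hx
    by_cases hCs : (Aᶜ.filter fun x => g x ≠ x).Nonempty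
    · -- swap a 2-orbit inside A with one outside
      obtain ⟨y, hy⟩ := hCs
      rw [Finset.mem_filter, Finset.mem_compl] at hy
      refine getB {x, g x} {y, g y} ?_ ?_ ?_ ?_ (pairinv x) (pairinv y)
      · exact Finset.insert_subset hx.1 (Finset.singleton_subset_iff.mpr (hmemA _ hx.1))
      · rw [Finset.disjoint_left]
        intro a ha
        rcases Finset.mem_insert.mp ha with h | h
        · exact h ▸ hy.1
        · rw [Finset.mem_singleton.mp h]; exact hmemC _ hy.1
      · rw [Finset.card_pair (Ne.symm hx.2), Finset.card_pair (Ne.symm hy.2)]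
      · exact ⟨y, Finset.mem_insert_self _ _⟩
    · -- everything outside A is fixed; replace a 2-orbit in A by two fixed points outside
      rw [Finset.not_nonempty_iff_eq_empty, Finset.filter_eq_empty_iff] at hCs
      have hfixed : ∀ y, y ∉ A → g y = y := by
        intro y hy
        have := hCs (Finset.mem_compl.mpr hy)
        simpa using this
      obtain ⟨c, hc, c', hc', hcc⟩ := Finset.one_lt_card.mp (lt_of_le_of_lt (by omega) compl_card)
      refine getB {x, g x} {c, c'} ?_ ?_ ?_ ?_ (pairinv x)
        (fixpairinv c c' (hfixed c (Finset.mem_compl.mp hc)) (hfixed c' (Finset.mem_compl.mp hc')))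
      · exact Finset.insert_subset hx.1 (Finset.singleton_subset_iff.mpr (hmemA _ hx.1))
      · rw [Finset.disjoint_left]
        intro a ha
        rcases Finset.mem_insert.mp ha with h | h
        · exact h ▸ Finset.mem_compl.mp hc
        · rw [Finset.mem_singleton.mp h]; exact Finset.mem_compl.mp hc'
      · rw [Finset.card_pair (Ne.symm hx.2), Finset.card_pair hcc]
      · exact ⟨c, Finset.mem_insert_self _ _⟩
  · -- everything in A is fixed
    rw [Finset.not_nonempty_iff_eq_empty, Finset.filter_eq_empty_iff] at hAs
    have hAfixed : ∀ x ∈ A, g x = x := by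
      intro x hx
      have := hAs hx
      simpa using this
    by_cases hCf : (Aᶜ.filter fun x => g x = x).Nonempty
    · -- swap a fixed point of A with a fixed point outside
      obtain ⟨a, ha⟩ := Finset.card_pos.mp (hAcard ▸ hk : 0 < A.card) 
      obtain ⟨c, hc⟩ := hCf
      rw [Finset.mem_filter, Finset.mem_compl] at hc
      refine getB {a} {c} (Finset.singleton_subset_iff.mpr ha)
        (Finset.disjoint_singleton_left.mpr hc.1) rfl ⟨c, Finset.mem_singleton_self c⟩ ?_ ?_
      · rw [Finset.image_singleton, hAfixed a ha]
      · rw [Finset.image_singleton, hc.2]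
    · -- everything outside A is moved; replace two fixed pts of A by a 2-orbit outside
      rw [Finset.not_nonempty_iff_eq_empty, Finset.filter_eq_empty_iff] at hCf
      obtain ⟨y, hy⟩ := Finset.card_pos.mp (lt_trans (by omega) compl_card)
      have hymem := Finset.mem_compl.mp hy
      have hymoved : g y ≠ y := by
        intro h
        exact (hCf hy) h
      obtain ⟨a, ha, a', ha', haa⟩ := Finset.one_lt_card.mp (by omega : 1 < A.card)
      refine getB {a, a'} {y, g y} ?_ ?_ ?_ ⟨y, Finset.mem_insert_self _ _⟩
        (fixpairinv a a' (hAfixed a ha) (hAfixed a' ha')) (pairinv y)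
      · exact Finset.insert_subset ha (Finset.singleton_subset_iff.mpr ha')
      · rw [Finset.disjoint_left]
        intro b hb
        rcases Finset.mem_insert.mp hb with h | h
        · exact h ▸ hymem
        · rw [Finset.mem_singleton.mp h]; exact hmemC _ hymem
      · rw [Finset.card_pair haa, Finset.card_pair (Ne.symm hymoved)]
lemma aux_mod4 {n : ℕ} (g : Equiv.Perm (Fin n)) (hmem : g ∈ alternatingGroup (Fin n))
    (hord : orderOf g = 2) (A : Finset (Fin n)) (hAcard : A.card = 1)
    (hfix : ∀ B : Finset (Fin n), B.card = 1 → (B.image ⇑g = B ↔ B = A)) : n % 4 = 1 := by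
  have hsupp : g.support.card % 4 = 0 := (aux_invol_alt hord).mp hmem
  obtain ⟨a, rfl⟩ := Finset.card_eq_one.mp hAcard
  have ha : g a = a := by
    have := (hfix {a} hAcard).mpr rfl
    rw [Finset.image_singleton] at this
    exact Finset.singleton_injective this
  have huniq : ∀ x : Fin n, g x = x → x = a := by
    intro x hx
    have := (hfix {x} (Finset.card_singleton x)).mp (by rw [Finset.image_singleton, hx])
    exact Finset.singleton_injective this
  have hcompl : g.supportᶜ = {a} := by
    ext x
    simp only [Finset.mem_compl, Equiv.Perm.notMem_support, Finset.mem_singleton]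
    exact ⟨huniq x, fun h => h ▸ ha⟩
  have hc := congrArg Finset.card hcompl
  rw [Finset.card_compl, Finset.card_singleton, Fintype.card_fin] at hc
  have := g.support.card_le_univ
  rw [Fintype.card_fin] at this
  omega
lemma aux_backward {n : ℕ} (hn : 2 < n) (hn4 : n % 4 = 1) :
    ∃ g : Equiv.Perm (Fin n), g ∈ alternatingGroup (Fin n) ∧ orderOf g = 2 ∧
      ∃ A : Finset (Fin n), A.card = 1 ∧
        (∀ B : Finset (Fin n), B.card = 1 → (B.image ⇑g = B ↔ B = A)) ∧
        (∀ (m : ℤ) (B : Finset (Fin n)), B.card = 1 → B ≠ A → B.image ⇑(g ^ m) = B →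
          ∀ C : Finset (Fin n), C.card = 1 → C.image ⇑(g ^ m) = C) := by
  set F : ℕ → ℕ := fun v => if v = 0 then 0 else if v % 2 = 1 then v + 1 else v - 1 with hF
  have hFlt : ∀ v, v < n → F v < n := by
    intro v hv
    simp only [hF]
    split_ifs <;> first | exact (‹False›).elim | omega
  set f : Fin n → Fin n := fun x => ⟨F x.val, hFlt _ x.isLt⟩ with hf
  have hFF : ∀ v, v < n → F (F v) = v := by
    intro v hv
    simp only [hF]
    split_ifs <;> first | exact (‹False›).elim | omega
  have hinv : Function.Involutive f := by
    intro x
    apply Fin.ext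
    exact hFF x.val x.isLt
  set g := hinv.toPerm with hg
  have hgapp : ∀ x : Fin n, g x = f x := fun _ => rfl
  have hkey : ∀ x : Fin n, g x = x ↔ x.val = 0 := by
    intro x
    rw [hgapp, Fin.ext_iff]
    show F x.val = x.val ↔ x.val = 0
    have := x.isLt
    simp only [hF]
    split_ifs <;> first | exact (‹False›).elim | omega
  have hg2 : g ^ 2 = 1 := by
    ext x
    simp [pow_succ, Equiv.Perm.mul_apply, hgapp, hinv x]
  have hg1 : g ≠ 1 := by
    intro h
    have : g ⟨1, by omega⟩ = ⟨1, by omega⟩ := by rw [h]; rfl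
    rw [hkey] at this
    simp at this
  have hord : orderOf g = 2 := orderOf_eq_prime hg2 hg1
  have hzero : (0 : ℕ) < n := by omega
  set a : Fin n := ⟨0, hzero⟩ with hadef
  have hga : g a = a := (hkey a).mpr rfl
  have hmem : g ∈ alternatingGroup (Fin n) := by
    rw [aux_invol_alt hord]
    have hsupp : g.support = ({a} : Finset (Fin n))ᶜ := by
      ext x
      simp only [Equiv.Perm.mem_support, Finset.mem_compl, Finset.mem_singleton]
      rw [Ne, hkey, Fin.ext_iff]
      try simp [hadef]
    rw [hsupp, Finset.card_compl, Finset.card_singleton, Fintype.card_fin]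
    omega
  have hsing : ∀ B : Finset (Fin n), B.card = 1 → (B.image ⇑g = B ↔ B = {a}) := by
    intro B hB
    obtain ⟨b, rfl⟩ := Finset.card_eq_one.mp hB
    rw [Finset.image_singleton]
    constructor
    · intro h
      have hb : g b = b := Finset.singleton_injective h
      rw [hkey] at hb
      rw [show b = a from Fin.ext hb]
    · intro h
      rw [Finset.singleton_injective h, hga]
  have h2z : g ^ (2 : ℤ) = 1 := by
    rw [show (2 : ℤ) = ((2 : ℕ) : ℤ) from rfl, zpow_natCast, hg2]
  refine ⟨g, hmem, hord, {a}, Finset.card_singleton a, hsing, ?_⟩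
  intro m B hBcard hBne hBinv C hCcard
  rcases Int.even_or_odd m with ⟨q, hq⟩ | ⟨q, hq⟩
  · have hone : g ^ m = 1 := by
      rw [hq, ← two_mul, zpow_mul, h2z, one_zpow]
    rw [hone]
    simp
  · have hgm : g ^ m = g := by
      rw [hq, zpow_add, zpow_mul, h2z, one_zpow, one_mul, zpow_one]
    rw [hgm] at hBinv
    exact absurd ((hsing B hBcard).mp hBinv) hBne

theorem stmt15 {n k : ℕ} (hk : 0 < k) (hkn : 2 * k < n) :
    (∃ g : Equiv.Perm (Fin n), g ∈ alternatingGroup (Fin n) ∧ orderOf g = 2 ∧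
      ∃ A : Finset (Fin n), A.card = k ∧
        (∀ B : Finset (Fin n), B.card = k → (B.image ⇑g = B ↔ B = A)) ∧
        (∀ (m : ℤ) (B : Finset (Fin n)), B.card = k → B ≠ A → B.image ⇑(g ^ m) = B →
          ∀ C : Finset (Fin n), C.card = k → C.image ⇑(g ^ m) = C)) ↔
      (k = 1 ∧ n % 4 = 1) := by
  constructor
  · rintro ⟨g, hmem, hord, A, hAcard, hfix, -⟩
    have hk1 : k = 1 := aux_k_one hk hkn g hord A hAcard hfix
    subst hk1
    exact ⟨rfl, aux_mod4 g hmem hord A hAcard hfix⟩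
  · rintro ⟨rfl, hn4⟩
    have hn : 2 < n := by omega
    exact aux_backward hn hn4
end

section
/- Let p be an odd prime, let m be an integer with 2 ≤ m ≤ p, and set n = pm. Every g ∈ Sym(n) with exactly p fixed points and m − 1 orbits of length p on {1,…,n} (cycle type 1^p p^{m−1}) is quasi-semiregular in the action of Sym(n) on the set of partitions of {1,…,n} into m parts of size p; its unique fixed partition consists of the set of fixed points of g together with the nontrivial ⟨g⟩-orbits. Moreover, if m ≤ p − 1, then every g ∈ Sym(n) with no fixed points and m orbits of length p (cycle type p^m) is also quasi-semiregular on this set of partitions, fixing only the partition whose parts are the ⟨g⟩-orbits. -/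
open Equiv Finset Pointwise

/-- `P` is a partition of `{1,…,n}` (here `Fin n`) into parts of size `k`:
every member of `P` has `k` elements and every point lies in exactly one member of `P`. -/
def IsSizedPartition (n k : ℕ) (P : Finset (Finset (Fin n))) : Prop :=
  (∀ A ∈ P, A.card = k) ∧ ∀ a : Fin n, ∃! A : Finset (Fin n), A ∈ P ∧ a ∈ A

section GroupAux

variable {G : Type*} [Group G]

/-- If `g ^ p = 1` with `p` prime and `g ^ w` lies in a subgroup with `¬ p ∣ w`,
then `g` lies in the subgroup. -/
lemma mem_of_pow_mem' {p : ℕ} (hp : p.Prime) {g : G} (hg : g ^ p = 1)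
    (S : Subgroup G) {w : ℕ} (hw : ¬ p ∣ w) (hgw : g ^ w ∈ S) : g ∈ S := by
  haveI := Fact.mk hp
  have hw0 : (w : ZMod p) ≠ 0 := fun h0 => hw ((ZMod.natCast_eq_zero_iff _ _).mp h0)
  set u := ((w : ZMod p)⁻¹).val with hu
  have hcast : ((u : ℕ) : ZMod p) = (w : ZMod p)⁻¹ := by
    rw [hu, ZMod.natCast_val, ZMod.cast_id]
  have hmod : (w * u) % p = 1 % p := by
    have h1 : ((w * u : ℕ) : ZMod p) = ((1 : ℕ) : ZMod p) := by
      push_cast [hcast]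
      rw [mul_inv_cancel₀ hw0]
    exact (ZMod.natCast_eq_natCast_iff _ _ _).mp h1
  have h1p : 1 % p = 1 := Nat.mod_eq_of_lt hp.one_lt
  have hgwu : g ^ (w * u) = g := by
    conv_lhs => rw [← Nat.div_add_mod (w * u) p]
    rw [pow_add, pow_mul, hg, one_pow, one_mul, hmod, h1p, pow_one]
  have : (g ^ w) ^ u ∈ S := S.pow_mem hgw u
  rwa [← pow_mul, hgwu] at this

end GroupAux

section PermAux

variable {n p : ℕ}

lemma sized_card {m : ℕ} (hn : n = p * m) (hp0 : 0 < p) {P : Finset (Finset (Fin n))}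
    (hP : IsSizedPartition n p P) : P.card = m := by
  classical
  have hdisj : (P : Set (Finset (Fin n))).PairwiseDisjoint id := by
    intro A hA B hB hAB
    simp only [Finset.disjoint_left, id]
    intro a haA haB
    obtain ⟨C, -, hC⟩ := hP.2 a
    exact hAB ((hC A ⟨hA, haA⟩).trans (hC B ⟨hB, haB⟩).symm)
  have hcover : P.biUnion id = Finset.univ := by
    apply Finset.eq_univ_iff_forall.mpr
    intro a
    obtain ⟨A, ⟨hA, haA⟩, -⟩ := hP.2 a
    exact Finset.mem_biUnion.mpr ⟨A, hA, haA⟩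
  have hsum := Finset.card_biUnion (s := P) (t := id)
    (fun A hA B hB hAB => hdisj hA hB hAB)
  rw [hcover, card_univ, Fintype.card_fin] at hsum
  simp only [id] at hsum
  rw [Finset.sum_congr rfl hP.1, Finset.sum_const, smul_eq_mul] at hsum
  have h2 : p * P.card = p * m := by rw [mul_comm p P.card, ← hsum, hn]
  exact Nat.eq_of_mul_eq_mul_left hp0 h2

variable {g : Equiv.Perm (Fin n)}

lemma smul_mem_of_inv {P : Finset (Finset (Fin n))} (hinv : g • P = P)
    {A : Finset (Fin n)} (hA : A ∈ P) : g • A ∈ P := by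
  rw [← hinv]; exact Finset.smul_mem_smul_finset hA

lemma pow_smul_mem_of_inv {P : Finset (Finset (Fin n))} (hinv : g • P = P)
    {A : Finset (Fin n)} (hA : A ∈ P) (k : ℕ) : g ^ k • A ∈ P := by
  induction k with
  | zero => simpa using hA
  | succ k ih =>
      rw [pow_succ']
      rw [mul_smul]
      exact smul_mem_of_inv hinv ih

/-- Master lemma: if a partition with at most `p` parts is `g`-invariant, where `g ^ p = 1`
and either `g` has a fixed point or the number of parts is `< p`, then every part is
`g`-invariant. -/
lemma part_invariant (hp : p.Prime) (hg : g ^ p = 1) {P : Finset (Finset (Fin n))}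
    (hP : IsSizedPartition n p P) (hinv : g • P = P) (hcard : P.card ≤ p)
    (hcase : (∃ f : Fin n, g f = f) ∨ P.card < p) :
    ∀ A ∈ P, g • A = A := by
  classical
  intro A hA
  by_contra hAg
  set F : Fin p → Finset (Fin n) := fun i => g ^ (i : ℕ) • A with hF
  have key : ∀ i j : Fin p, (i : ℕ) < (j : ℕ) → F i ≠ F j := by
    intro i j hlt hij
    set w := (j : ℕ) - (i : ℕ) with hw
    have hwA : g ^ w • A = A := by
      have h1 : g ^ (i : ℕ) • (g ^ w • A) = g ^ (i : ℕ) • A := by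
        rw [← mul_smul, ← pow_add]
        have : (i : ℕ) + w = (j : ℕ) := by omega
        rw [this]
        exact hij.symm
      exact smul_left_cancel _ h1
    have hwp : ¬ p ∣ w := by
      intro hd
      have := Nat.le_of_dvd (by omega) hd
      have := j.isLt
      omega
    exact hAg (mem_of_pow_mem' hp hg (MulAction.stabilizer (Equiv.Perm (Fin n)) A) hwp hwA)
  have hFinj : Function.Injective F := by
    intro i j hij
    by_contra hne
    rcases Nat.lt_or_ge (i : ℕ) (j : ℕ) with h | h
    · exact key i j h hij
    · have h' : (j : ℕ) < (i : ℕ) := by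
        rcases Nat.lt_or_ge (j : ℕ) (i : ℕ) with h' | h'
        · exact h'
        · exact absurd (Fin.ext (by omega)) hne
      exact key j i h' hij.symm
  have hsub : Finset.univ.image F ⊆ P := by
    intro B hB
    obtain ⟨i, -, rfl⟩ := Finset.mem_image.mp hB
    exact pow_smul_mem_of_inv hinv hA _
  have hcardF : (Finset.univ.image F).card = p := by
    rw [Finset.card_image_of_injective _ hFinj, card_univ, Fintype.card_fin]
  rcases hcase with ⟨f, hf⟩ | hlt
  · -- a fixed point gives an extra invariant part
    obtain ⟨B, ⟨hBP, hfB⟩, huniq⟩ := hP.2 f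
    have hgB : g • B = B := by
      have h1 : g • B ∈ P := smul_mem_of_inv hinv hBP
      have h2 : f ∈ g • B := by
        have : g • f ∈ g • B := Finset.smul_mem_smul_finset hfB
        rwa [Equiv.Perm.smul_def, hf] at this
      have hb1 := huniq (g • B) ⟨h1, h2⟩
      have hb2 := huniq B ⟨hBP, hfB⟩
      rw [hb1, hb2]
    have hBnot : B ∉ Finset.univ.image F := by
      intro hB
      obtain ⟨i, -, hBi⟩ := Finset.mem_image.mp hB
      apply hAg
      have h1 : g ^ (i : ℕ) • (g • A) = g ^ (i : ℕ) • A := by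
        rw [← mul_smul]
        have hc : g ^ (i : ℕ) * g = g * g ^ (i : ℕ) := (Commute.pow_self g (i : ℕ)).eq
        rw [hc, mul_smul]
        show g • F i = F i
        rw [hBi, hgB]
      exact smul_left_cancel _ h1
    have : p + 1 ≤ P.card := by
      have hsub2 : insert B (Finset.univ.image F) ⊆ P := by
        rw [Finset.insert_subset_iff]; exact ⟨hBP, hsub⟩
      have h3 := Finset.card_le_card hsub2
      rw [Finset.card_insert_of_notMem hBnot, hcardF] at h3
      omega
    omega
  · have := Finset.card_le_card hsub
    omega

/-- An invariant part of size `p` containing a non-fixed point is the support of its cycle. -/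
lemma part_eq_support (hcyc : ∀ a : Fin n, g a ≠ a → (g.cycleOf a).support.card = p)
    {A : Finset (Fin n)} (hAcard : A.card = p) (hginv : g • A = A)
    {a : Fin n} (ha : a ∈ A) (hafix : g a ≠ a) :
    A = (g.cycleOf a).support := by
  have hstab : g ∈ MulAction.stabilizer (Equiv.Perm (Fin n)) A := hginv
  have hzinv : ∀ j : ℤ, g ^ j • A = A := fun j =>
    (MulAction.stabilizer (Equiv.Perm (Fin n)) A).zpow_mem hstab j
  have hsub : (g.cycleOf a).support ⊆ A := by
    intro b hb
    obtain ⟨hsc, -⟩ := Equiv.Perm.mem_support_cycleOf_iff.mp hb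
    obtain ⟨jj, hj⟩ := hsc
    have : (g ^ jj) • a ∈ g ^ jj • A := Finset.smul_mem_smul_finset ha
    rw [hzinv jj] at this
    rwa [Equiv.Perm.smul_def, hj] at this
  exact ((Finset.eq_of_subset_of_card_le hsub (by rw [hAcard, hcyc a hafix])).symm)

lemma support_cycleOf_smul (a : Fin n) : g • (g.cycleOf a).support = (g.cycleOf a).support := by
  apply Finset.eq_of_subset_of_card_le
  · intro x hx
    obtain ⟨b, hb, rfl⟩ := Finset.mem_smul_finset.mp hx
    obtain ⟨hsc, hsupp⟩ := Equiv.Perm.mem_support_cycleOf_iff.mp hb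
    rw [Equiv.Perm.smul_def]
    exact Equiv.Perm.mem_support_cycleOf_iff.mpr ⟨Equiv.Perm.sameCycle_apply_right.mpr hsc, hsupp⟩
  · rw [Finset.card_smul_finset]

end PermAux

lemma fixed_filter_smul {n : ℕ} (g : Equiv.Perm (Fin n)) :
    g • (Finset.univ.filter fun a => g a = a) = Finset.univ.filter fun a => g a = a := by
  ext x
  simp only [Finset.mem_smul_finset, Finset.mem_filter, Finset.mem_univ, true_and,
    Equiv.Perm.smul_def]
  constructor
  · rintro ⟨y, hy, rfl⟩; rw [hy]; exact hy
  · intro hx; exact ⟨x, hx, hx⟩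

theorem stmt18 {p m : ℕ} (hp : p.Prime) (hodd : Odd p) (hm2 : 2 ≤ m) (hmp : m ≤ p)
    {n : ℕ} (hn : n = p * m) :
    (∀ g : Equiv.Perm (Fin n),
      (Finset.univ.filter fun a => g a = a).card = p →
      g.cycleType = Multiset.replicate (m - 1) p →
      ((∀ P : Finset (Finset (Fin n)), IsSizedPartition n p P →
          (P.image (fun A => A.image ⇑g) = P ↔
            P = insert (Finset.univ.filter fun a => g a = a)
              ((Finset.univ.filter fun a => g a ≠ a).image fun a => (g.cycleOf a).support))) ∧
        ∀ (j : ℤ) (P : Finset (Finset (Fin n))), IsSizedPartition n p P →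
          P ≠ insert (Finset.univ.filter fun a => g a = a)
              ((Finset.univ.filter fun a => g a ≠ a).image fun a => (g.cycleOf a).support) →
          P.image (fun A => A.image ⇑(g ^ j)) = P →
          ∀ R : Finset (Finset (Fin n)), IsSizedPartition n p R →
            R.image (fun A => A.image ⇑(g ^ j)) = R)) ∧
    (m ≤ p - 1 →
      ∀ g : Equiv.Perm (Fin n),
        (∀ a : Fin n, g a ≠ a) →
        g.cycleType = Multiset.replicate m p →
        ((∀ P : Finset (Finset (Fin n)), IsSizedPartition n p P →
            (P.image (fun A => A.image ⇑g) = P ↔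
              P = Finset.univ.image fun a => (g.cycleOf a).support)) ∧
          ∀ (j : ℤ) (P : Finset (Finset (Fin n))), IsSizedPartition n p P →
            P ≠ Finset.univ.image (fun a => (g.cycleOf a).support) →
            P.image (fun A => A.image ⇑(g ^ j)) = P →
            ∀ R : Finset (Finset (Fin n)), IsSizedPartition n p R →
              R.image (fun A => A.image ⇑(g ^ j)) = R)) := by
  have hp0 : 0 < p := hp.pos
  have hp1 : 1 < p := hp.one_lt
  constructor
  · -- Case 1 : cycle type 1^p p^(m-1)
    intro g hfix hct
    have hg : g ^ p = 1 := by
      rw [← orderOf_dvd_iff_pow_eq_one, ← Equiv.Perm.lcm_cycleType, hct]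
      exact Multiset.lcm_dvd.mpr fun b hb => by rw [Multiset.eq_of_mem_replicate hb]
    have hcyc : ∀ a : Fin n, g a ≠ a → (g.cycleOf a).support.card = p := by
      intro a ha
      have hmem : g.cycleOf a ∈ g.cycleFactorsFinset :=
        Equiv.Perm.cycleOf_mem_cycleFactorsFinset_iff.mpr (Equiv.Perm.mem_support.mpr ha)
      have hmem2 : (g.cycleOf a).support.card ∈ g.cycleType := by
        rw [Equiv.Perm.cycleType_def]
        exact Multiset.mem_map.mpr ⟨g.cycleOf a, Finset.mem_val.mpr hmem, rfl⟩
      rw [hct] at hmem2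
      exact Multiset.eq_of_mem_replicate hmem2
    obtain ⟨f0, hf0⟩ : ∃ f : Fin n, g f = f := by
      have h1 : 0 < (Finset.univ.filter fun a => g a = a).card := by rw [hfix]; exact hp0
      obtain ⟨f, hf⟩ := Finset.card_pos.mp h1
      exact ⟨f, (Finset.mem_filter.mp hf).2⟩
    have hiff : ∀ P : Finset (Finset (Fin n)), IsSizedPartition n p P →
        (P.image (fun A => A.image ⇑g) = P ↔
          P = insert (Finset.univ.filter fun a => g a = a)
            ((Finset.univ.filter fun a => g a ≠ a).image fun a => (g.cycleOf a).support)) := by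
      intro P hP
      show g • P = P ↔ _
      constructor
      · intro hPinv
        have hPc : P.card = m := sized_card hn hp0 hP
        have hparts := part_invariant hp hg hP hPinv (by omega) (Or.inl ⟨f0, hf0⟩)
        apply Finset.Subset.antisymm
        · intro A hA
          have hAcard := hP.1 A hA
          by_cases hA' : ∃ a ∈ A, g a ≠ a
          · obtain ⟨a, haA, hana⟩ := hA'
            have hAs := part_eq_support hcyc hAcard (hparts A hA) haA hana
            rw [hAs]
            exact Finset.mem_insert_of_mem (Finset.mem_image.mpr
              ⟨a, Finset.mem_filter.mpr ⟨Finset.mem_univ a, hana⟩, rfl⟩)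
          · push_neg at hA'
            have hsub : A ⊆ Finset.univ.filter fun a => g a = a :=
              fun a ha => Finset.mem_filter.mpr ⟨Finset.mem_univ a, hA' a ha⟩
            have hAF : A = Finset.univ.filter fun a => g a = a :=
              Finset.eq_of_subset_of_card_le hsub (by rw [hAcard, hfix])
            rw [hAF]
            exact Finset.mem_insert_self _ _
        · rw [Finset.insert_subset_iff]
          constructor
          · obtain ⟨B, ⟨hBP, hfB⟩, -⟩ := hP.2 f0
            have hBcard := hP.1 B hBP
            have hBinv := hparts B hBP
            by_cases hB' : ∃ b ∈ B, g b ≠ b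
            · exfalso
              obtain ⟨b, hbB, hbnb⟩ := hB'
              have hBs := part_eq_support hcyc hBcard hBinv hbB hbnb
              have h1 : f0 ∈ (g.cycleOf b).support := hBs ▸ hfB
              have h2 := Equiv.Perm.support_cycleOf_le g b h1
              exact (Equiv.Perm.mem_support.mp h2) hf0
            · push_neg at hB'
              have hsub : B ⊆ Finset.univ.filter fun a => g a = a :=
                fun a ha => Finset.mem_filter.mpr ⟨Finset.mem_univ a, hB' a ha⟩
              have hBF : B = Finset.univ.filter fun a => g a = a :=
                Finset.eq_of_subset_of_card_le hsub (by rw [hBcard, hfix])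
              rwa [← hBF]
          · intro S hS
            obtain ⟨a, haf, rfl⟩ := Finset.mem_image.mp hS
            have hana := (Finset.mem_filter.mp haf).2
            obtain ⟨A, ⟨hAP, haA⟩, -⟩ := hP.2 a
            have hAs := part_eq_support hcyc (hP.1 A hAP) (hparts A hAP) haA hana
            rwa [← hAs]
      · rintro rfl
        rw [Finset.smul_finset_insert]
        congr 1
        · exact fixed_filter_smul g
        · calc g • ((Finset.univ.filter fun a => g a ≠ a).image fun a => (g.cycleOf a).support)
              = ((Finset.univ.filter fun a => g a ≠ a).image
                  fun a => (g.cycleOf a).support).image (fun S => g • S) := rfl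
            _ = ((Finset.univ.filter fun a => g a ≠ a).image
                  fun a => (g.cycleOf a).support).image id := Finset.image_congr (by
                    intro S hS
                    obtain ⟨a, -, rfl⟩ := Finset.mem_image.mp hS
                    exact support_cycleOf_smul a)
            _ = _ := Finset.image_id
    refine ⟨hiff, ?_⟩
    intro j P hPsized hPne hPj R hR
    have hgz : g ^ (p : ℤ) = 1 := by rw [zpow_natCast, hg]
    set k := (j % (p : ℤ)).toNat with hk
    have hjnn : 0 ≤ j % (p : ℤ) := Int.emod_nonneg j (by exact_mod_cast hp0.ne')
    have hkk : (k : ℤ) = j % (p : ℤ) := Int.toNat_of_nonneg hjnn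
    have hjk : g ^ j = g ^ k := by
      conv_lhs => rw [← Int.mul_ediv_add_emod j (p : ℤ)]
      rw [zpow_add, zpow_mul, hgz, one_zpow, one_mul, ← hkk, zpow_natCast]
    by_cases hk0 : k = 0
    · have h1 : (g : Equiv.Perm (Fin n)) ^ j = 1 := by rw [hjk, hk0, pow_zero]
      rw [h1]
      simp
    · exfalso
      apply hPne
      have hPj' : g ^ k • P = P := by rw [← hjk]; exact hPj
      have hkp : ¬ p ∣ k := by
        have hklt : k < p := by
          have h2 := Int.emod_lt_of_pos j (b := (p : ℤ)) (by exact_mod_cast hp0)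
          omega
        intro hd
        have := Nat.le_of_dvd (Nat.pos_of_ne_zero hk0) hd
        omega
      have hstab : g ∈ MulAction.stabilizer (Equiv.Perm (Fin n)) P :=
        mem_of_pow_mem' hp hg _ hkp (MulAction.mem_stabilizer_iff.mpr hPj')
      exact (hiff P hPsized).mp (MulAction.mem_stabilizer_iff.mp hstab)
  · -- Case 2 : cycle type p^m, no fixed points
    intro hmp1 g hnofix hct
    have hg : g ^ p = 1 := by
      rw [← orderOf_dvd_iff_pow_eq_one, ← Equiv.Perm.lcm_cycleType, hct]
      exact Multiset.lcm_dvd.mpr fun b hb => by rw [Multiset.eq_of_mem_replicate hb]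
    have hcyc : ∀ a : Fin n, g a ≠ a → (g.cycleOf a).support.card = p := by
      intro a ha
      have hmem : g.cycleOf a ∈ g.cycleFactorsFinset :=
        Equiv.Perm.cycleOf_mem_cycleFactorsFinset_iff.mpr (Equiv.Perm.mem_support.mpr ha)
      have hmem2 : (g.cycleOf a).support.card ∈ g.cycleType := by
        rw [Equiv.Perm.cycleType_def]
        exact Multiset.mem_map.mpr ⟨g.cycleOf a, Finset.mem_val.mpr hmem, rfl⟩
      rw [hct] at hmem2
      exact Multiset.eq_of_mem_replicate hmem2
    have hiff : ∀ P : Finset (Finset (Fin n)), IsSizedPartition n p P →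
        (P.image (fun A => A.image ⇑g) = P ↔
          P = Finset.univ.image fun a => (g.cycleOf a).support) := by
      intro P hP
      show g • P = P ↔ _
      constructor
      · intro hPinv
        have hPc : P.card = m := sized_card hn hp0 hP
        have hparts := part_invariant hp hg hP hPinv (by omega) (Or.inr (by omega))
        apply Finset.Subset.antisymm
        · intro A hA
          have hAcard := hP.1 A hA
          obtain ⟨a, haA⟩ := Finset.card_pos.mp (by rw [hAcard]; exact hp0)
          have hAs := part_eq_support hcyc hAcard (hparts A hA) haA (hnofix a)
          rw [hAs]
          exact Finset.mem_image.mpr ⟨a, Finset.mem_univ a, rfl⟩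
        · intro S hS
          obtain ⟨a, -, rfl⟩ := Finset.mem_image.mp hS
          obtain ⟨A, ⟨hAP, haA⟩, -⟩ := hP.2 a
          have hAs := part_eq_support hcyc (hP.1 A hAP) (hparts A hAP) haA (hnofix a)
          rwa [← hAs]
      · rintro rfl
        calc g • (Finset.univ.image fun a => (g.cycleOf a).support)
            = (Finset.univ.image fun a => (g.cycleOf a).support).image (fun S => g • S) := rfl
          _ = (Finset.univ.image fun a => (g.cycleOf a).support).image id :=
              Finset.image_congr (by
                intro S hS
                obtain ⟨a, -, rfl⟩ := Finset.mem_image.mp hS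
                exact support_cycleOf_smul a)
          _ = _ := Finset.image_id
    refine ⟨hiff, ?_⟩
    intro j P hPsized hPne hPj R hR
    have hgz : g ^ (p : ℤ) = 1 := by rw [zpow_natCast, hg]
    set k := (j % (p : ℤ)).toNat with hk
    have hjnn : 0 ≤ j % (p : ℤ) := Int.emod_nonneg j (by exact_mod_cast hp0.ne')
    have hkk : (k : ℤ) = j % (p : ℤ) := Int.toNat_of_nonneg hjnn
    have hjk : g ^ j = g ^ k := by
      conv_lhs => rw [← Int.mul_ediv_add_emod j (p : ℤ)]
      rw [zpow_add, zpow_mul, hgz, one_zpow, one_mul, ← hkk, zpow_natCast]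
    by_cases hk0 : k = 0
    · have h1 : (g : Equiv.Perm (Fin n)) ^ j = 1 := by rw [hjk, hk0, pow_zero]
      rw [h1]
      simp
    · exfalso
      apply hPne
      have hPj' : g ^ k • P = P := by rw [← hjk]; exact hPj
      have hkp : ¬ p ∣ k := by
        have hklt : k < p := by
          have h2 := Int.emod_lt_of_pos j (b := (p : ℤ)) (by exact_mod_cast hp0)
          omega
        intro hd
        have := Nat.le_of_dvd (Nat.pos_of_ne_zero hk0) hd
        omega
      have hstab : g ∈ MulAction.stabilizer (Equiv.Perm (Fin n)) P :=
        mem_of_pow_mem' hp hg _ hkp (MulAction.mem_stabilizer_iff.mpr hPj')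
      exact (hiff P hPsized).mp (MulAction.mem_stabilizer_iff.mp hstab)
end

section
/- Let G be a finite group acting transitively on a finite set Ω, let α ∈ Ω with stabilizer H = G_α, and let K ≤ H be a subgroup. Suppose the set of G-conjugates of K that are contained in H is the disjoint union of exactly t H-conjugacy classes, with representatives K₁, …, K_t. Then the number of points ω ∈ Ω fixed by every element of K equals ∑_{i=1}^t |N_G(K_i)| / |N_H(K_i)|, where N_H(K_i) = N_G(K_i) ∩ H. In particular, if t = 1, this number equals the index |N_G(K) : N_H(K)|. -/
open ConjAct MulAction Pointwise

theorem conjSubgroup_eq_smul {G : Type*} [Group G] (g : G) (K : Subgroup G) :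
    conjSubgroup g K = toConjAct g • K := rfl

theorem Subgroup.relIndex_eq_card_div_card_inf {G : Type*} [Group G] [Finite G]
    (H N : Subgroup G) : H.relIndex N = Nat.card N / Nat.card (N ⊓ H : Subgroup G) := by
  have h := relIndex_inf_mul_relIndex ⊥ H N
  rw [relIndex_bot_left, bot_inf_eq, relIndex_bot_left, inf_comm] at h
  rw [← h, Nat.mul_div_cancel_left _ Nat.card_pos]

theorem MulAction.card_orbit_subgroup {G Ω : Type*} [Group G] [MulAction G Ω]
    (N : Subgroup G) (a : Ω) : Nat.card (orbit N a) = (stabilizer G a).relIndex N := by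
  rw [Nat.card_coe_set_eq, ← index_stabilizer]
  rfl

theorem Nat.card_eq_sum_card_of_existsUnique {α ι : Type*} [Finite α] [Fintype ι]
    (P : ι → α → Prop) (h : ∀ a, ∃! i, P i a) :
    Nat.card α = ∑ i, Nat.card {a // P i a} := by
  choose f hf using h
  rw [← Nat.card_congr (Equiv.sigmaFiberEquiv f), Nat.card_sigma]
  refine Finset.sum_congr rfl fun i _ => Nat.card_congr (Equiv.subtypeEquivRight fun a => ?_)
  exact ⟨fun hfa => hfa ▸ (hf a).1, fun hP => ((hf a).2 i hP).symm⟩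

theorem MulAction.le_stabilizer_iff_smul_le_stabilizer_smul {G Ω : Type*} [Group G]
    [MulAction G Ω] (g : G) (K : Subgroup G) (ω : Ω) :
    K ≤ stabilizer G ω ↔ toConjAct g • K ≤ stabilizer G (g • ω) := by
  rw [stabilizer_smul_eq_stabilizer_map_conj, ← conjSubgroup, conjSubgroup_eq_smul,
    Subgroup.pointwise_smul_le_pointwise_smul_iff]

section ConjFiber

variable {G Ω : Type*} [Group G] [MulAction G Ω]

/-- For `R ≤ G_α` these are points fixed by `K`; as `R` runs over representatives of the
`G_α`-classes of conjugates of `K` inside `G_α`, they partition the fixed points of `K`. -/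
def conjFiber (K : Subgroup G) (α : Ω) (R : Subgroup G) : Set Ω :=
  {ω | ∃ g : G, g • ω = α ∧ toConjAct g • K = R}

variable {K R R' : Subgroup G} {α ω : Ω}

theorem le_stabilizer_of_mem_conjFiber (hR : R ≤ stabilizer G α) (hω : ω ∈ conjFiber K α R) :
    K ≤ stabilizer G ω := by
  obtain ⟨g, rfl, rfl⟩ := hω
  exact (le_stabilizer_iff_smul_le_stabilizer_smul g K ω).2 hR

theorem conjFiber_smul_of_mem_stabilizer {h : G} (hh : h ∈ stabilizer G α) :
    conjFiber K α (toConjAct h • R) = conjFiber K α R := by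
  suffices ∀ {h : G} {R : Subgroup G}, h ∈ stabilizer G α →
      conjFiber K α R ⊆ conjFiber K α (toConjAct h • R) from
    (this hh).antisymm' <| by
      simpa only [toConjAct_inv, inv_smul_smul] using this (R := toConjAct h • R) (inv_mem hh)
  rintro h R hh ω ⟨g, hgω, rfl⟩
  exact ⟨h * g, by rw [mul_smul, hgω, hh], by rw [map_mul, mul_smul]⟩

theorem exists_smul_eq_of_mem_conjFiber (hω : ω ∈ conjFiber K α R)
    (hω' : ω ∈ conjFiber K α R') : ∃ h ∈ stabilizer G α, toConjAct h • R = R' := by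
  obtain ⟨g, hgω, rfl⟩ := hω
  obtain ⟨g', hg'ω, rfl⟩ := hω'
  refine ⟨g' * g⁻¹, ?_, ?_⟩
  · rw [mem_stabilizer_iff, mul_smul, inv_smul_eq_iff.2 hgω.symm, hg'ω]
  · rw [map_mul, mul_smul, map_inv, inv_smul_smul]

theorem exists_mem_conjFiber_of_le_stabilizer [IsPretransitive G Ω] (hK : K ≤ stabilizer G ω) :
    ∃ g : G, ω ∈ conjFiber K α (toConjAct g • K) ∧ toConjAct g • K ≤ stabilizer G α := by
  obtain ⟨g, hg⟩ := exists_smul_eq G ω α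
  exact ⟨g, ⟨g, hg, rfl⟩, hg ▸ (le_stabilizer_iff_smul_le_stabilizer_smul g K ω).1 hK⟩

theorem card_conjFiber {g₀ : G} (hg₀ : toConjAct g₀ • K = R) :
    Nat.card (conjFiber K α R) = (stabilizer G α).relIndex (Subgroup.normalizer (R : Set G)) := by
  rw [← card_orbit_subgroup]
  refine Nat.card_congr (Equiv.subtypeEquiv (toPerm g₀) fun ω => ?_)
  simp only [toPerm_apply, mem_orbit_iff, Subtype.exists, Subgroup.mk_smul]
  constructor
  · rintro ⟨g, hgω, rfl⟩
    refine ⟨g₀ * g⁻¹, ?_, by rw [mul_smul, ← hgω, inv_smul_smul]⟩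
    rw [← Subgroup.conjAct_pointwise_smul_iff, map_mul, mul_smul, map_inv, inv_smul_smul, hg₀]
  · rintro ⟨n, hn, hnα⟩
    refine ⟨n⁻¹ * g₀, by rw [mul_smul, ← hnα, inv_smul_smul], ?_⟩
    rw [map_mul, mul_smul, hg₀, map_inv, inv_smul_eq_iff, Subgroup.conjAct_pointwise_smul_iff.2 hn]

end ConjFiber

theorem card_fixed_eq_sum_card_conjFiber {G Ω : Type*} [Group G] [Finite Ω] [MulAction G Ω]
    [IsPretransitive G Ω] (α : Ω) (K : Subgroup G) {t : ℕ} (reps : Fin t → Subgroup G)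
    (hreps : ∀ i, reps i ≤ stabilizer G α)
    (hclasses : ∀ L : Subgroup G, (∃ g : G, toConjAct g • K = L) → L ≤ stabilizer G α →
      ∃! i : Fin t, ∃ h ∈ stabilizer G α, toConjAct h • reps i = L) :
    Nat.card {ω : Ω // ∀ x ∈ K, x • ω = ω} = ∑ i, Nat.card (conjFiber K α (reps i)) := by
  have hpart (ω : {ω : Ω // ∀ x ∈ K, x • ω = ω}) : ∃! i, ω.1 ∈ conjFiber K α (reps i) := by
    obtain ⟨g, hωL, hL⟩ := exists_mem_conjFiber_of_le_stabilizer (α := α) fun x hx => ω.2 x hx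
    obtain ⟨i, ⟨h, hh, hi⟩, huniq⟩ := hclasses _ ⟨g, rfl⟩ hL
    refine ⟨i, ?_, fun j hj => huniq j (exists_smul_eq_of_mem_conjFiber hj hωL)⟩
    show ω.1 ∈ _
    rwa [← conjFiber_smul_of_mem_stabilizer hh, hi]
  rw [Nat.card_eq_sum_card_of_existsUnique _ hpart]
  exact Finset.sum_congr rfl fun i _ => Nat.card_congr <|
    Equiv.subtypeSubtypeEquivSubtype fun hω => le_stabilizer_of_mem_conjFiber (hreps i) hω

theorem stmt19 {G Ω : Type*} [Group G] [Finite G] [Finite Ω] [MulAction G Ω]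
    (htrans : MulAction.IsPretransitive G Ω) (α : Ω)
    (H : Subgroup G) (hH : H = MulAction.stabilizer G α)
    (K : Subgroup G) (hKH : K ≤ H)
    (t : ℕ) (reps : Fin t → Subgroup G)
    (hreps : ∀ i : Fin t, (∃ g : G, conjSubgroup g K = reps i) ∧ reps i ≤ H)
    (hclasses : ∀ L : Subgroup G, (∃ g : G, conjSubgroup g K = L) → L ≤ H →
      ∃! i : Fin t, ∃ h ∈ H, conjSubgroup h (reps i) = L) :
    Nat.card {ω : Ω // ∀ x ∈ K, x • ω = ω} =
      (∑ i : Fin t,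
        Nat.card (Subgroup.normalizer (reps i : Set G)) / Nat.card ((Subgroup.normalizer (reps i : Set G) ⊓ H : Subgroup G))) ∧
    (t = 1 → Nat.card {ω : Ω // ∀ x ∈ K, x • ω = ω} = H.relIndex (Subgroup.normalizer (K : Set G))) := by
  subst hH
  simp only [conjSubgroup_eq_smul] at hreps hclasses
  have hcount := card_fixed_eq_sum_card_conjFiber α K reps (fun i => (hreps i).2) hclasses
  refine ⟨hcount.trans <| Finset.sum_congr rfl fun i _ => ?_, ?_⟩
  · obtain ⟨g, hg⟩ := (hreps i).1
    rw [card_conjFiber hg, Subgroup.relIndex_eq_card_div_card_inf]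
  · rintro rfl
    have hK : toConjAct (1 : G) • K = K := by rw [map_one, one_smul]
    obtain ⟨i, ⟨h, hh, hi⟩, -⟩ := hclasses K ⟨1, hK⟩ hKH
    rw [hcount, Fin.sum_univ_one, Subsingleton.elim 0 i, ← conjFiber_smul_of_mem_stabilizer hh, hi,
      card_conjFiber hK]
end
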